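/- arXiv:math/9811054 — 5 statements merged into one kernel-verified Lean document; each statement's English description precedes it below -/
import Mathlib

section
/- Let (V, ▷, β) be a crossed module over the Hopf algebra H and let χ ∈ H⊗H be a counital 2-cocycle. Define the twisted coaction β_χ : V → H⊗V by β_χ(v) = χ⁽¹⁾·(χ⁻⁽¹⁾ ▷ v)₍₁₎·χ⁻⁽²⁾ ⊗ χ⁽²⁾ ▷ (χ⁻⁽¹⁾ ▷ v)₍∞₎ (one implicit summation over the legs of χ and one over the legs of χ⁻¹). Then β_χ is a counital coaction which is coassociative for the twisted coproduct, i.e. (ε⊗id)∘β_χ = id_V and (Δ_χ⊗id)∘β_χ = (id⊗β_χ)∘β_χ. -/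
/-!
Write `P ▸ (a ⊗ v) = P⁽¹⁾a ⊗ P⁽²⁾ ▷ v` for the action of `A ⊗ H` on `A ⊗ V` (`map₂ (mul k A) ρ`)
and `G(Y)(v) = β(Y⁽¹⁾ ▷ v) · Y⁽²⁾` (`halfTwist`), so that `β_χ = χ ▸ G(χ⁻¹)` (`twist`).
Counitality is immediate from `(ε ⊗ id)χ = 1 = (id ⊗ ε)χ⁻¹`.

For coassociativity, both sides are the image of `t = G(χ⁻¹)(v)` under a map
`a ⊗ w ↦ ξ⁽¹⁾a ⊗ χ ▸ G(ξ⁽²⁾ ⊗ ξ⁽³⁾)(w)`. For the right side `ξ = χ⁻¹₂₃ χ₁₂`. For the left side the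
cocycle identity, its inverse `((id ⊗ Δ)χ⁻¹) χ⁻¹₂₃ = ((Δ ⊗ id)χ⁻¹) χ⁻¹₁₂` and, twice, the
crossed-module condition in the form `Δ(h) ▸ β(v) = G(Δ h)(v)` give `ξ = ((id ⊗ Δ)χ) ((Δ ⊗ id)χ⁻¹)`,
which equals `χ⁻¹₂₃ χ₁₂` by the cocycle identity.
-/

open scoped TensorProduct
open TensorProduct LinearMap

namespace PaperTwist

variable (k H : Type) [Field k] [Ring H] [HopfAlgebra k H]

/-- The comultiplication of `H`. -/
noncomputable def Δ : H →ₗ[k] H ⊗[k] H := Coalgebra.comul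

/-- The counit of `H`. -/
noncomputable def ε : H →ₗ[k] k := Coalgebra.counit

/-- The antipode of `H`. -/
noncomputable def S : H →ₗ[k] H := HopfAlgebra.antipode k

/-- `χ`, with (two-sided) inverse `χ'` in the algebra `H ⊗ H`, is a counital 2-cocycle:
`χ₂₃ · ((id ⊗ Δ) χ) = χ₁₂ · ((Δ ⊗ id) χ)` and `(ε ⊗ id) χ = 1 = (id ⊗ ε) χ`. -/
def IsCocycle (χ χ' : H ⊗[k] H) : Prop :=
  χ * χ' = 1 ∧ χ' * χ = 1 ∧
    (1 ⊗ₜ[k] χ) * (LinearMap.lTensor H (Δ k H) χ) =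
      (TensorProduct.assoc k H H H) ((χ ⊗ₜ[k] 1) * (LinearMap.rTensor H (Δ k H) χ)) ∧
    (TensorProduct.lid k H) ((LinearMap.rTensor H (ε k H)) χ) = 1 ∧
    (TensorProduct.rid k H) ((LinearMap.lTensor H (ε k H)) χ) = 1

variable (V : Type) [AddCommGroup V] [Module k V]

/-- A (left-left) crossed module (Drinfeld–Radford–Yetter module) over `H`:
a left action `ρ` and a counital coassociative left coaction `β` satisfying
`h₁·v₍₁₎ ⊗ h₂ ▷ v₍∞₎ = (h₁ ▷ v)₍₁₎·h₂ ⊗ (h₁ ▷ v)₍∞₎`, the latter expressed via arbitrary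
finite representations of `Δ h`. -/
structure IsCrossedModule (ρ : H →ₗ[k] V →ₗ[k] V) (β : V →ₗ[k] H ⊗[k] V) : Prop where
  act_one : ∀ v : V, ρ 1 v = v
  act_mul : ∀ (g h : H) (v : V), ρ (g * h) v = ρ g (ρ h v)
  coact_counit : ∀ v : V, (TensorProduct.lid k V) ((LinearMap.rTensor V (ε k H)) (β v)) = v
  coact_coassoc : ∀ v : V,
    (LinearMap.rTensor V (Δ k H)) (β v)
      = (TensorProduct.assoc k H H V).symm ((LinearMap.lTensor H β) (β v))
  compat : ∀ (h : H) (v : V) (ι : Type) (s : Finset ι) (h1 h2 : ι → H),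
    Δ k H h = ∑ i ∈ s, h1 i ⊗ₜ[k] h2 i →
    ∑ i ∈ s, (TensorProduct.map (LinearMap.mulLeft k (h1 i)) (ρ (h2 i))) (β v)
      = ∑ i ∈ s, (LinearMap.rTensor V (LinearMap.mulRight k (h2 i))) (β (ρ (h1 i) v))

/-- The twisted coaction `β_χ(v) = χ⁽¹⁾·(χ⁻⁽¹⁾ ▷ v)₍₁₎·χ⁻⁽²⁾ ⊗ χ⁽²⁾ ▷ (χ⁻⁽¹⁾ ▷ v)₍∞₎`,
expressed through finite representations `χ = ∑ x1 i ⊗ x2 i`, `χ⁻¹ = ∑ y1 j ⊗ y2 j`. -/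
noncomputable def twistedCoaction (ρ : H →ₗ[k] V →ₗ[k] V) (β : V →ₗ[k] H ⊗[k] V)
    {ι₁ ι₂ : Type} (s₁ : Finset ι₁) (x1 x2 : ι₁ → H) (s₂ : Finset ι₂) (y1 y2 : ι₂ → H) :
    V →ₗ[k] H ⊗[k] V :=
  ∑ i ∈ s₁, ∑ j ∈ s₂,
    (TensorProduct.map ((LinearMap.mulLeft k (x1 i)) ∘ₗ (LinearMap.mulRight k (y2 j)))
        (ρ (x2 i))) ∘ₗ β ∘ₗ (ρ (y1 j))

/-- The twisted coproduct `Δ_χ(h) = χ · Δ(h) · χ⁻¹`. -/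
noncomputable def twistedComul (χ χ' : H ⊗[k] H) : H →ₗ[k] H ⊗[k] H :=
  (LinearMap.mulLeft k χ) ∘ₗ (LinearMap.mulRight k χ') ∘ₗ (Δ k H)

end PaperTwist

open PaperTwist

namespace PaperTwist

section Action

variable {k A B H V : Type*} [CommRing k] [Ring A] [Algebra k A] [Ring B] [Algebra k B]
  [Ring H] [Algebra k H] [AddCommGroup V] [Module k V] (ρ : H →ₗ[k] V →ₗ[k] V)

lemma map₂_mul_mul (hmul : ∀ (g h : H) (v : V), ρ (g * h) v = ρ g (ρ h v))
    (X Y : A ⊗[k] H) (t : A ⊗[k] V) :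
    map₂ (mul k A) ρ (X * Y) t = map₂ (mul k A) ρ X (map₂ (mul k A) ρ Y t) := by
  induction X using TensorProduct.induction_on with
  | zero => simp
  | add X X' hX hX' => simp only [add_mul, map_add, LinearMap.add_apply, hX, hX']
  | tmul a h =>
    induction Y using TensorProduct.induction_on with
    | zero => simp
    | add Y Y' hY hY' => simp only [mul_add, map_add, LinearMap.add_apply, hY, hY']
    | tmul b g =>
      induction t using TensorProduct.induction_on with
      | zero => simp
      | add t t' ht ht' => simp only [map_add, ht, ht']
      | tmul m v => simp [mul_assoc, hmul]

lemma map₂_tmul_one (hone : ∀ v : V, ρ 1 v = v) (a : A) (t : A ⊗[k] V) :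
    map₂ (mul k A) ρ (a ⊗ₜ 1) t = rTensor V (mulLeft k a) t := by
  induction t using TensorProduct.induction_on with
  | zero => simp
  | add t t' ht ht' => simp only [map_add, ht, ht']
  | tmul m v => simp [hone]

lemma map₂_rTensor_mulRight (X : A ⊗[k] H) (b : A) (t : A ⊗[k] V) :
    map₂ (mul k A) ρ X (rTensor V (mulRight k b) t)
      = rTensor V (mulRight k b) (map₂ (mul k A) ρ X t) := by
  induction X using TensorProduct.induction_on with
  | zero => simp
  | add X X' hX hX' => simp only [map_add, LinearMap.add_apply, hX, hX']
  | tmul a h =>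
    induction t using TensorProduct.induction_on with
    | zero => simp
    | add t t' ht ht' => simp only [map_add, ht, ht']
    | tmul m v => simp [mul_assoc]

lemma rTensor_map₂_mul (f : A →ₐ[k] B) (X : A ⊗[k] H) (t : A ⊗[k] V) :
    rTensor V f.toLinearMap (map₂ (mul k A) ρ X t)
      = map₂ (mul k B) ρ (rTensor H f.toLinearMap X) (rTensor V f.toLinearMap t) := by
  induction X using TensorProduct.induction_on with
  | zero => simp
  | add X X' hX hX' => simp only [map_add, LinearMap.add_apply, hX, hX']
  | tmul a h =>
    induction t using TensorProduct.induction_on with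
    | zero => simp
    | add t t' ht ht' => simp only [map_add, ht, ht']
    | tmul m v => simp

lemma lid_rTensor_map₂_mul (f : A →ₐ[k] k) (X : A ⊗[k] H) (t : A ⊗[k] V) :
    TensorProduct.lid k V (rTensor V f.toLinearMap (map₂ (mul k A) ρ X t))
      = ρ (TensorProduct.lid k H (rTensor H f.toLinearMap X))
          (TensorProduct.lid k V (rTensor V f.toLinearMap t)) := by
  induction X using TensorProduct.induction_on with
  | zero => simp
  | add X X' hX hX' => simp only [map_add, LinearMap.add_apply, hX, hX']
  | tmul a h =>
    induction t using TensorProduct.induction_on with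
    | zero => simp
    | add t t' ht ht' => simp only [map_add, ht, ht']
    | tmul m v => simp [mul_smul, smul_comm (f a)]

lemma assoc_map₂_mul (ξ : A ⊗[k] (B ⊗[k] H)) (K : (A ⊗[k] B) ⊗[k] V) :
    TensorProduct.assoc k A B V
        (map₂ (mul k (A ⊗[k] B)) ρ ((TensorProduct.assoc k A B H).symm ξ) K)
      = map₂ (mul k A) (map₂ (mul k B) ρ) ξ (TensorProduct.assoc k A B V K) := by
  induction ξ using TensorProduct.induction_on with
  | zero => simp
  | add ξ ξ' hξ hξ' => simp only [map_add, LinearMap.add_apply, hξ, hξ']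
  | tmul a Q =>
    induction Q using TensorProduct.induction_on with
    | zero => simp
    | add Q Q' hQ hQ' => simp only [tmul_add, map_add, LinearMap.add_apply, hQ, hQ']
    | tmul b h =>
      induction K using TensorProduct.induction_on with
      | zero => simp
      | add K K' hK hK' => simp only [map_add, hK, hK']
      | tmul E v =>
        induction E using TensorProduct.induction_on with
        | zero => simp
        | add E E' hE hE' => simp only [add_tmul, map_add, hE, hE']
        | tmul m n => simp

end Action

section HalfTwist

variable {k H V : Type*} [CommRing k] [Ring H] [Algebra k H] [AddCommGroup V] [Module k V]
  (ρ : H →ₗ[k] V →ₗ[k] V) (β : V →ₗ[k] H ⊗[k] V)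

def halfTwist : H ⊗[k] H →ₗ[k] V →ₗ[k] H ⊗[k] V :=
  lift ((llcomp k V (H ⊗[k] V) (H ⊗[k] V)).flip.compl₁₂ (llcomp k V V (H ⊗[k] V) β ∘ₗ ρ)
    (rTensorHom V ∘ₗ (mul k H).flip))

@[simp] lemma halfTwist_tmul (a b : H) (v : V) :
    halfTwist ρ β (a ⊗ₜ b) v = rTensor V (mulRight k b) (β (ρ a v)) :=
  rfl

/-- `halfTwist₂ Z v = ((id ⊗ β) β(Z⁽¹⁾ ▷ v)) · (Z⁽²⁾ ⊗ Z⁽³⁾)`, the analogue of `halfTwist` for the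
iterated coaction. -/
def halfTwist₂ : (H ⊗[k] H) ⊗[k] H →ₗ[k] V →ₗ[k] H ⊗[k] (H ⊗[k] V) :=
  lift ((llcomp k V (H ⊗[k] V) (H ⊗[k] (H ⊗[k] V))).flip.compl₁₂ (halfTwist ρ β)
    (lTensorHom H ∘ₗ (llcomp k V (H ⊗[k] V) (H ⊗[k] V)).flip β ∘ₗ rTensorHom V ∘ₗ
      (mul k H).flip))

@[simp] lemma halfTwist₂_tmul (E : H ⊗[k] H) (s : H) (v : V) :
    halfTwist₂ ρ β (E ⊗ₜ s) v
      = lTensor H (rTensor V (mulRight k s) ∘ₗ β) (halfTwist ρ β E v) :=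
  rfl

def twist (χ : H ⊗[k] H) : H ⊗[k] H →ₗ[k] V →ₗ[k] H ⊗[k] V :=
  llcomp k V (H ⊗[k] V) (H ⊗[k] V) (map₂ (mul k H) ρ χ) ∘ₗ halfTwist ρ β

@[simp] lemma twist_apply (χ Y : H ⊗[k] H) (v : V) :
    twist ρ β χ Y v = map₂ (mul k H) ρ χ (halfTwist ρ β Y v) :=
  rfl

variable {ρ} in
lemma halfTwist_mul_tmul (hmul : ∀ (g h : H) (v : V), ρ (g * h) v = ρ g (ρ h v))
    (X : H ⊗[k] H) (c d : H) (v : V) :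
    halfTwist ρ β (X * (c ⊗ₜ d)) v = rTensor V (mulRight k d) (halfTwist ρ β X (ρ c v)) := by
  induction X using TensorProduct.induction_on with
  | zero => simp
  | add X X' hX hX' => simp only [add_mul, map_add, LinearMap.add_apply, hX, hX']
  | tmul a b => simp [hmul, mulRight_mul, rTensor_comp]

variable {β} in
lemma lid_rTensor_halfTwist (f : H →ₐ[k] k)
    (hβ : ∀ v : V, TensorProduct.lid k V (rTensor V f.toLinearMap (β v)) = v)
    (Y : H ⊗[k] H) (v : V) :
    TensorProduct.lid k V (rTensor V f.toLinearMap (halfTwist ρ β Y v))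
      = ρ (TensorProduct.rid k H (lTensor H f.toLinearMap Y)) v := by
  induction Y using TensorProduct.induction_on with
  | zero => simp
  | add Y Y' hY hY' => simp only [map_add, LinearMap.add_apply, hY, hY']
  | tmul a b =>
    have hf : f.toLinearMap ∘ₗ mulRight k b = f b • f.toLinearMap := by
      ext x; simp [mul_comm]
    rw [halfTwist_tmul, ← rTensor_comp_apply, hf, rTensor_smul, LinearMap.smul_apply, map_smul,
      hβ]
    simp

lemma assoc_rTensor_mulRight_lTensor_eq_halfTwist₂ (c : H) (E : H ⊗[k] H) (v : V) :
    TensorProduct.assoc k H H V (rTensor V (mulRight k E)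
        ((TensorProduct.assoc k H H V).symm (lTensor H β (β (ρ c v)))))
      = halfTwist₂ ρ β ((TensorProduct.assoc k H H H).symm (c ⊗ₜ E)) v := by
  induction E using TensorProduct.induction_on with
  | zero => simp
  | add E E' hE hE' =>
    have hadd : mulRight k (E + E') = mulRight k E + mulRight k E' :=
      LinearMap.ext fun x => mul_add x E E'
    simp only [hadd, rTensor_add, LinearMap.add_apply, tmul_add, map_add, hE, hE']
  | tmul e₁ e₂ =>
    rw [assoc_symm_tmul, halfTwist₂_tmul, halfTwist_tmul]
    generalize β (ρ c v) = τ
    induction τ using TensorProduct.induction_on with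
    | zero => simp
    | add τ τ' hτ hτ' => simp only [map_add, hτ, hτ']
    | tmul m w =>
      simp only [lTensor_tmul, rTensor_tmul, comp_apply]
      generalize β w = u
      induction u using TensorProduct.induction_on with
      | zero => simp
      | add u u' hu hu' => simp only [tmul_add, map_add, hu, hu']
      | tmul n x => simp

variable {ρ} in
lemma lTensor_twist_map₂ (hmul : ∀ (g h : H) (v : V), ρ (g * h) v = ρ g (ρ h v))
    (χ X Y : H ⊗[k] H) (t : H ⊗[k] V) :
    lTensor H (twist ρ β χ Y) (map₂ (mul k H) ρ X t)
      = map₂ (mul k H) (twist ρ β χ)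
          ((1 ⊗ₜ Y) * TensorProduct.assoc k H H H (X ⊗ₜ 1)) t := by
  induction X using TensorProduct.induction_on with
  | zero => simp
  | add X X' hX hX' => simp only [add_tmul, map_add, mul_add, LinearMap.add_apply, hX, hX']
  | tmul p q =>
    induction Y using TensorProduct.induction_on with
    | zero => simp
    | add Y Y' hY hY' =>
      simp only [tmul_add, add_mul, map_add, lTensor_add, LinearMap.add_apply, hY, hY']
    | tmul c d =>
      induction t using TensorProduct.induction_on with
      | zero => simp
      | add t t' ht ht' => simp only [map_add, ht, ht']
      | tmul m w => simp [hmul]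

end HalfTwist

section Hopf

variable {k H V : Type} [Field k] [Ring H] [HopfAlgebra k H] [AddCommGroup V] [Module k V]

lemma lTensor_comul_mul (X Y : H ⊗[k] H) :
    lTensor H (Δ k H) (X * Y) = lTensor H (Δ k H) X * lTensor H (Δ k H) Y :=
  map_mul (Algebra.TensorProduct.lTensor H (Bialgebra.comulAlgHom k H)) X Y

lemma lTensor_comul_one : lTensor H (Δ k H) (1 : H ⊗[k] H) = 1 :=
  map_one (Algebra.TensorProduct.lTensor H (Bialgebra.comulAlgHom k H))

lemma rTensor_comul_mul (X Y : H ⊗[k] H) :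
    rTensor H (Δ k H) (X * Y) = rTensor H (Δ k H) X * rTensor H (Δ k H) Y :=
  map_mul (Algebra.TensorProduct.rTensor H (Bialgebra.comulAlgHom k H)) X Y

lemma rTensor_comul_one : rTensor H (Δ k H) (1 : H ⊗[k] H) = 1 :=
  map_one (Algebra.TensorProduct.rTensor H (Bialgebra.comulAlgHom k H))

lemma assoc_mul (X Y : (H ⊗[k] H) ⊗[k] H) :
    TensorProduct.assoc k H H H (X * Y)
      = TensorProduct.assoc k H H H X * TensorProduct.assoc k H H H Y :=
  map_mul (Algebra.TensorProduct.assoc k k k H H H) X Y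

lemma assoc_one : TensorProduct.assoc k H H H (1 : (H ⊗[k] H) ⊗[k] H) = 1 :=
  map_one (Algebra.TensorProduct.assoc k k k H H H)

lemma rid_lTensor_counit_mul (X Y : H ⊗[k] H) :
    TensorProduct.rid k H (lTensor H (ε k H) (X * Y))
      = TensorProduct.rid k H (lTensor H (ε k H) X) * TensorProduct.rid k H (lTensor H (ε k H) Y) :=
  map_mul ((Algebra.TensorProduct.rid k k H).toAlgHom.comp
    (Algebra.TensorProduct.lTensor H (Bialgebra.counitAlgHom k H))) X Y

lemma rid_lTensor_counit_one : TensorProduct.rid k H (lTensor H (ε k H) (1 : H ⊗[k] H)) = 1 :=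
  map_one ((Algebra.TensorProduct.rid k k H).toAlgHom.comp
    (Algebra.TensorProduct.lTensor H (Bialgebra.counitAlgHom k H)))

lemma rTensor_comul_map₂ (ρ : H →ₗ[k] V →ₗ[k] V) (X : H ⊗[k] H) (t : H ⊗[k] V) :
    rTensor V (Δ k H) (map₂ (mul k H) ρ X t)
      = map₂ (mul k (H ⊗[k] H)) ρ (rTensor H (Δ k H) X) (rTensor V (Δ k H) t) :=
  rTensor_map₂_mul ρ (Bialgebra.comulAlgHom k H) X t

end Hopf

section Cocycle

variable {k H : Type} [Field k] [Ring H] [HopfAlgebra k H] {χ χ' : H ⊗[k] H}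

lemma IsCocycle.assoc_symm_lTensor_comul_inv (hχ : IsCocycle k H χ χ') :
    (TensorProduct.assoc k H H H).symm (lTensor H (Δ k H) χ' * (1 ⊗ₜ χ'))
      = rTensor H (Δ k H) χ' * (χ' ⊗ₜ 1) := by
  obtain ⟨h₁, h₂, hcoc, -, -⟩ := hχ
  rw [LinearEquiv.symm_apply_eq]
  -- both sides are inverses of the two sides of the cocycle identity
  refine (left_inv_eq_right_inv (a := (1 ⊗ₜ χ) * lTensor H (Δ k H) χ) ?_ ?_).symm
  · rw [hcoc, ← assoc_mul, mul_assoc, ← mul_assoc (χ' ⊗ₜ 1), Algebra.TensorProduct.tmul_mul_tmul,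
      h₂, one_mul, ← Algebra.TensorProduct.one_def, one_mul, ← rTensor_comul_mul, h₂,
      rTensor_comul_one, assoc_one]
  · rw [mul_assoc, ← mul_assoc (lTensor H (Δ k H) χ), ← lTensor_comul_mul, h₁, lTensor_comul_one,
      one_mul, Algebra.TensorProduct.tmul_mul_tmul, h₁, one_mul]
    exact Algebra.TensorProduct.one_def.symm

lemma IsCocycle.lTensor_comul_mul_assoc_rTensor_comul_inv (hχ : IsCocycle k H χ χ') :
    lTensor H (Δ k H) χ * TensorProduct.assoc k H H H (rTensor H (Δ k H) χ')
      = (1 ⊗ₜ χ') * TensorProduct.assoc k H H H (χ ⊗ₜ 1) := by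
  obtain ⟨h₁, h₂, hcoc, -, -⟩ := hχ
  have hL : lTensor H (Δ k H) χ = (1 ⊗ₜ χ') * ((1 ⊗ₜ χ) * lTensor H (Δ k H) χ) := by
    rw [← mul_assoc, Algebra.TensorProduct.tmul_mul_tmul, h₂, one_mul,
      ← Algebra.TensorProduct.one_def, one_mul]
  rw [hL, hcoc, mul_assoc, ← assoc_mul, mul_assoc, ← rTensor_comul_mul, h₁, rTensor_comul_one,
    mul_one]

lemma IsCocycle.rid_lTensor_counit_inv (hχ : IsCocycle k H χ χ') :
    TensorProduct.rid k H (lTensor H (ε k H) χ') = 1 := by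
  obtain ⟨-, h₂, -, -, hεr⟩ := hχ
  calc TensorProduct.rid k H (lTensor H (ε k H) χ')
      = TensorProduct.rid k H (lTensor H (ε k H) χ')
          * TensorProduct.rid k H (lTensor H (ε k H) χ) := by
        rw [hεr, mul_one]
    _ = 1 := by rw [← rid_lTensor_counit_mul, h₂, rid_lTensor_counit_one]

end Cocycle

section CrossedModule

variable {k H V : Type} [Field k] [Ring H] [HopfAlgebra k H] [AddCommGroup V] [Module k V]
  {ρ : H →ₗ[k] V →ₗ[k] V} {β : V →ₗ[k] H ⊗[k] V}

namespace IsCrossedModule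

lemma map₂_comul_coaction (hcm : IsCrossedModule k H V ρ β) (h : H) (v : V) :
    map₂ (mul k H) ρ (Δ k H h) (β v) = halfTwist ρ β (Δ k H h) v := by
  obtain ⟨s, hs⟩ := TensorProduct.exists_finset (Δ k H h)
  have := hcm.compat h v (H × H) s Prod.fst Prod.snd hs
  rw [hs, map_sum, LinearMap.sum_apply, map_sum, LinearMap.sum_apply]
  exact this

lemma halfTwist_comul_mul (hcm : IsCrossedModule k H V ρ β) (h : H) (Y : H ⊗[k] H) (v : V) :
    halfTwist ρ β (Δ k H h * Y) v = map₂ (mul k H) ρ (Δ k H h) (halfTwist ρ β Y v) := by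
  induction Y using TensorProduct.induction_on with
  | zero => simp
  | add Y Y' hY hY' => simp only [mul_add, map_add, LinearMap.add_apply, hY, hY']
  | tmul c d =>
    rw [halfTwist_mul_tmul β hcm.act_mul, ← hcm.map₂_comul_coaction, halfTwist_tmul,
      map₂_rTensor_mulRight]

lemma assoc_rTensor_mulRight_comul_halfTwist (hcm : IsCrossedModule k H V ρ β)
    (Y D : H ⊗[k] H) (v : V) :
    TensorProduct.assoc k H H V
        (rTensor V (mulRight k D) (rTensor V (Δ k H) (halfTwist ρ β Y v)))
      = halfTwist₂ ρ β ((TensorProduct.assoc k H H H).symm (lTensor H (Δ k H) Y * (1 ⊗ₜ D))) v := by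
  induction Y using TensorProduct.induction_on with
  | zero => simp
  | add Y Y' hY hY' => simp only [add_mul, map_add, LinearMap.add_apply, hY, hY']
  | tmul c d =>
    have hΔ : Δ k H ∘ₗ mulRight k d = mulRight k (Δ k H d) ∘ₗ Δ k H :=
      LinearMap.ext fun x => map_mul (Bialgebra.comulAlgHom k H) x d
    rw [halfTwist_tmul, ← rTensor_comp_apply V (Δ k H), hΔ, rTensor_comp_apply, hcm.coact_coassoc,
      ← rTensor_comp_apply V (mulRight k D), ← mulRight_mul, lTensor_tmul,
      Algebra.TensorProduct.tmul_mul_tmul, mul_one, assoc_rTensor_mulRight_lTensor_eq_halfTwist₂]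

lemma map₂_map₂_lTensor_map₂ (hcm : IsCrossedModule k H V ρ β) (χ : H ⊗[k] H) (x₁ x₂ : H)
    (P : H ⊗[k] H) (s : H) (t : H ⊗[k] V) :
    map₂ (mul k H) (map₂ (mul k H) ρ) ((1 ⊗ₜ χ) * (x₁ ⊗ₜ Δ k H x₂))
        (lTensor H (rTensor V (mulRight k s) ∘ₗ β) (map₂ (mul k H) ρ P t))
      = map₂ (mul k H) (twist ρ β χ)
          ((x₁ ⊗ₜ Δ k H x₂) * TensorProduct.assoc k H H H (P ⊗ₜ s)) t := by
  induction P using TensorProduct.induction_on with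
  | zero => simp
  | add P P' hP hP' => simp only [add_tmul, map_add, mul_add, LinearMap.add_apply, hP, hP']
  | tmul p₁ p₂ =>
    induction t using TensorProduct.induction_on with
    | zero => simp
    | add t t' ht ht' => simp only [map_add, ht, ht']
    | tmul m w =>
      simp only [Algebra.TensorProduct.tmul_mul_tmul, one_mul, assoc_tmul, map₂_apply_tmul,
        map_tmul, lTensor_tmul, mul_apply', comp_apply, twist_apply, mul_assoc]
      rw [map₂_mul_mul ρ hcm.act_mul, map₂_rTensor_mulRight, hcm.map₂_comul_coaction,
        halfTwist_mul_tmul β hcm.act_mul]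

lemma map₂_map₂_halfTwist₂ (hcm : IsCrossedModule k H V ρ β) (χ X Y Y' : H ⊗[k] H) (v : V) :
    map₂ (mul k H) (map₂ (mul k H) ρ) ((1 ⊗ₜ χ) * lTensor H (Δ k H) X)
        (halfTwist₂ ρ β (rTensor H (Δ k H) Y * (Y' ⊗ₜ 1)) v)
      = map₂ (mul k H) (twist ρ β χ)
          (lTensor H (Δ k H) X * TensorProduct.assoc k H H H (rTensor H (Δ k H) Y))
          (halfTwist ρ β Y' v) := by
  induction X using TensorProduct.induction_on with
  | zero => simp
  | add X X' hX hX' => simp only [map_add, mul_add, add_mul, LinearMap.add_apply, hX, hX']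
  | tmul x₁ x₂ =>
    induction Y using TensorProduct.induction_on with
    | zero => simp
    | add Y Y' hY hY' => simp only [map_add, mul_add, add_mul, LinearMap.add_apply, hY, hY']
    | tmul y₁ y₂ =>
      rw [lTensor_tmul, rTensor_tmul, Algebra.TensorProduct.tmul_mul_tmul _ Y' y₂, mul_one,
        halfTwist₂_tmul, hcm.halfTwist_comul_mul, hcm.map₂_map₂_lTensor_map₂]

end IsCrossedModule

end CrossedModule

section Twist

variable {k H V : Type} [Field k] [Ring H] [HopfAlgebra k H] [AddCommGroup V] [Module k V]
  {ρ : H →ₗ[k] V →ₗ[k] V} {β : V →ₗ[k] H ⊗[k] V} {χ χ' : H ⊗[k] H}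

lemma assoc_rTensor_twistedComul_map₂ (hone : ∀ v : V, ρ 1 v = v)
    (hmul : ∀ (g h : H) (v : V), ρ (g * h) v = ρ g (ρ h v))
    (hcoc : (1 ⊗ₜ[k] χ) * lTensor H (Δ k H) χ
      = TensorProduct.assoc k H H H ((χ ⊗ₜ[k] 1) * rTensor H (Δ k H) χ))
    (t : H ⊗[k] V) :
    TensorProduct.assoc k H H V (rTensor V (twistedComul k H χ χ') (map₂ (mul k H) ρ χ t))
      = map₂ (mul k H) (map₂ (mul k H) ρ) ((1 ⊗ₜ χ) * lTensor H (Δ k H) χ)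
          (TensorProduct.assoc k H H V (rTensor V (mulRight k χ') (rTensor V (Δ k H) t))) := by
  have hcoc' : (χ ⊗ₜ[k] 1) * rTensor H (Δ k H) χ
      = (TensorProduct.assoc k H H H).symm ((1 ⊗ₜ χ) * lTensor H (Δ k H) χ) := by
    rw [hcoc, LinearEquiv.symm_apply_apply]
  simp only [twistedComul, rTensor_comp, comp_apply]
  rw [rTensor_comul_map₂, ← map₂_rTensor_mulRight, ← map₂_tmul_one ρ hone,
    ← map₂_mul_mul ρ hmul, hcoc', assoc_map₂_mul]

lemma twistedCoaction_eq_twist {ι₁ ι₂ : Type} (s₁ : Finset ι₁) (x1 x2 : ι₁ → H)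
    (s₂ : Finset ι₂) (y1 y2 : ι₂ → H)
    (hx : χ = ∑ i ∈ s₁, x1 i ⊗ₜ[k] x2 i) (hy : χ' = ∑ j ∈ s₂, y1 j ⊗ₜ[k] y2 j) :
    twistedCoaction k H V ρ β s₁ x1 x2 s₂ y1 y2 = twist ρ β χ χ' := by
  ext v
  simp only [twistedCoaction, twist_apply, hx, hy, map_sum, LinearMap.sum_apply, comp_apply,
    map₂_apply_tmul, halfTwist_tmul]
  rw [Finset.sum_comm]
  refine Finset.sum_congr rfl fun j _ => Finset.sum_congr rfl fun i _ => ?_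
  rw [← map_comp_rTensor]
  rfl

namespace IsCrossedModule

lemma lid_rTensor_counit_twist (hcm : IsCrossedModule k H V ρ β) (hχ : IsCocycle k H χ χ')
    (v : V) :
    TensorProduct.lid k V (rTensor V (ε k H) (twist ρ β χ χ' v)) = v := by
  calc TensorProduct.lid k V (rTensor V (ε k H) (twist ρ β χ χ' v))
      = ρ (TensorProduct.lid k H (rTensor H (ε k H) χ))
          (TensorProduct.lid k V (rTensor V (ε k H) (halfTwist ρ β χ' v))) :=
        lid_rTensor_map₂_mul ρ (Bialgebra.counitAlgHom k H) χ _
    _ = ρ (TensorProduct.rid k H (lTensor H (ε k H) χ')) v := by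
        rw [hχ.2.2.2.1, hcm.act_one]
        exact lid_rTensor_halfTwist ρ (Bialgebra.counitAlgHom k H) hcm.coact_counit χ' v
    _ = v := by rw [hχ.rid_lTensor_counit_inv, hcm.act_one]

lemma rTensor_twistedComul_twist (hcm : IsCrossedModule k H V ρ β) (hχ : IsCocycle k H χ χ')
    (v : V) :
    rTensor V (twistedComul k H χ χ') (twist ρ β χ χ' v)
      = (TensorProduct.assoc k H H V).symm (lTensor H (twist ρ β χ χ') (twist ρ β χ χ' v)) := by
  rw [LinearEquiv.eq_symm_apply]
  calc TensorProduct.assoc k H H V (rTensor V (twistedComul k H χ χ') (twist ρ β χ χ' v))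
      = map₂ (mul k H) (map₂ (mul k H) ρ) ((1 ⊗ₜ χ) * lTensor H (Δ k H) χ)
          (halfTwist₂ ρ β ((TensorProduct.assoc k H H H).symm
            (lTensor H (Δ k H) χ' * (1 ⊗ₜ χ'))) v) := by
        rw [twist_apply, assoc_rTensor_twistedComul_map₂ hcm.act_one hcm.act_mul hχ.2.2.1,
          hcm.assoc_rTensor_mulRight_comul_halfTwist]
    _ = map₂ (mul k H) (twist ρ β χ)
          (lTensor H (Δ k H) χ * TensorProduct.assoc k H H H (rTensor H (Δ k H) χ'))
          (halfTwist ρ β χ' v) := by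
        rw [hχ.assoc_symm_lTensor_comul_inv, hcm.map₂_map₂_halfTwist₂]
    _ = lTensor H (twist ρ β χ χ') (twist ρ β χ χ' v) := by
        rw [hχ.lTensor_comul_mul_assoc_rTensor_comul_inv, twist_apply,
          lTensor_twist_map₂ β hcm.act_mul]

end IsCrossedModule

end Twist

end PaperTwist

theorem statement_0_general
    {k H V : Type} [Field k] [Ring H] [HopfAlgebra k H] [AddCommGroup V] [Module k V]
    (ρ : H →ₗ[k] V →ₗ[k] V) (β : V →ₗ[k] H ⊗[k] V)
    (hcm : IsCrossedModule k H V ρ β)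
    (χ χ' : H ⊗[k] H) (hχ : IsCocycle k H χ χ')
    {ι₁ ι₂ : Type} (s₁ : Finset ι₁) (x1 x2 : ι₁ → H) (s₂ : Finset ι₂) (y1 y2 : ι₂ → H)
    (hx : χ = ∑ i ∈ s₁, x1 i ⊗ₜ[k] x2 i) (hy : χ' = ∑ j ∈ s₂, y1 j ⊗ₜ[k] y2 j) :
    (∀ v : V, (TensorProduct.lid k V)
        ((LinearMap.rTensor V (ε k H))
          (twistedCoaction k H V ρ β s₁ x1 x2 s₂ y1 y2 v)) = v)
    ∧ (∀ v : V,
        (LinearMap.rTensor V (twistedComul k H χ χ'))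
            (twistedCoaction k H V ρ β s₁ x1 x2 s₂ y1 y2 v)
          = (TensorProduct.assoc k H H V).symm
              ((LinearMap.lTensor H (twistedCoaction k H V ρ β s₁ x1 x2 s₂ y1 y2))
                (twistedCoaction k H V ρ β s₁ x1 x2 s₂ y1 y2 v))) := by
  rw [twistedCoaction_eq_twist s₁ x1 x2 s₂ y1 y2 hx hy]
  exact ⟨hcm.lid_rTensor_counit_twist hχ, hcm.rTensor_twistedComul_twist hχ⟩

/-- For a crossed module `(V, ρ, β)` over `H` and a counital 2-cocycle
`χ ∈ H ⊗ H` (with inverse `χ'`), the twisted coaction `β_χ` is counital and coassociative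
with respect to the twisted coproduct `Δ_χ`. -/
theorem statement_0
    {k H V : Type} [Field k] [Ring H] [HopfAlgebra k H] [AddCommGroup V] [Module k V]
    (hS : Function.Bijective (S k H))
    (ρ : H →ₗ[k] V →ₗ[k] V) (β : V →ₗ[k] H ⊗[k] V)
    (hcm : IsCrossedModule k H V ρ β)
    (χ χ' : H ⊗[k] H) (hχ : IsCocycle k H χ χ')
    {ι₁ ι₂ : Type} (s₁ : Finset ι₁) (x1 x2 : ι₁ → H) (s₂ : Finset ι₂) (y1 y2 : ι₂ → H)
    (hx : χ = ∑ i ∈ s₁, x1 i ⊗ₜ[k] x2 i) (hy : χ' = ∑ j ∈ s₂, y1 j ⊗ₜ[k] y2 j) :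
    (∀ v : V, (TensorProduct.lid k V)
        ((LinearMap.rTensor V (ε k H))
          (twistedCoaction k H V ρ β s₁ x1 x2 s₂ y1 y2 v)) = v)
    ∧ (∀ v : V,
        (LinearMap.rTensor V (twistedComul k H χ χ'))
            (twistedCoaction k H V ρ β s₁ x1 x2 s₂ y1 y2 v)
          = (TensorProduct.assoc k H H V).symm
              ((LinearMap.lTensor H (twistedCoaction k H V ρ β s₁ x1 x2 s₂ y1 y2))
                (twistedCoaction k H V ρ β s₁ x1 x2 s₂ y1 y2 v))) :=
  statement_0_general ρ β hcm χ χ' hχ s₁ x1 x2 s₂ y1 y2 hx hy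
end

section
/- Let (V, ▷, β) be a crossed module over the Hopf algebra H, χ ∈ H⊗H a counital 2-cocycle, and β_χ(v) = χ⁽¹⁾·(χ⁻⁽¹⁾ ▷ v)₍₁₎·χ⁻⁽²⁾ ⊗ χ⁽²⁾ ▷ (χ⁻⁽¹⁾ ▷ v)₍∞₎ the twisted coaction. Writing Δ_χ(h) = h₍<1>₎⊗h₍<2>₎ for the twisted coproduct and β_χ(v) = v₍<1>₎⊗v₍<∞>₎, the unchanged action ▷ and the twisted coaction β_χ satisfy the crossed module compatibility over H_χ: h₍<1>₎·v₍<1>₎ ⊗ h₍<2>₎ ▷ v₍<∞>₎ = (h₍<1>₎ ▷ v)₍<1>₎·h₍<2>₎ ⊗ (h₍<1>₎ ▷ v)₍<∞>₎ for all h ∈ H, v ∈ V (products taken in H, whose multiplication is unchanged under twisting). -/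
open scoped TensorProduct
open TensorProduct LinearMap

open PaperTwist

/-!
For `u = a ⊗ b ∈ H ⊗ H`, let `tensorAct ρ u` act on `H ⊗ V` by `x ⊗ w ↦ a x ⊗ b ▷ w`, and let
`homAct ρ u` act on the right on maps `f : V → H ⊗ V` by `f ↦ (· b) ∘ f ∘ (a ▷ ·)`. The two actions
commute, the crossed module condition reads `tensorAct (Δ h) ∘ β = homAct (Δ h) β`, and the twisted
coaction is `tensorAct χ ∘ homAct χ⁻¹ β`. Replacing `Δ h` by `χ Δ(h) χ⁻¹`, the factor `χ⁻¹ χ`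
cancels on both sides of the compatibility, which then reduces to the untwisted one.
-/

namespace PaperTwist

variable {k H V : Type} [Field k] [Ring H] [HopfAlgebra k H] [AddCommGroup V] [Module k V]

noncomputable def tensorAct (ρ : H →ₗ[k] V →ₗ[k] V) :
    H ⊗[k] H →ₗ[k] Module.End k (H ⊗[k] V) :=
  TensorProduct.map₂ (LinearMap.mul k H) ρ

noncomputable def homAct (ρ : H →ₗ[k] V →ₗ[k] V) :
    H ⊗[k] H →ₗ[k] Module.End k (V →ₗ[k] H ⊗[k] V) :=
  TensorProduct.lift ((LinearMap.mul k (Module.End k (V →ₗ[k] H ⊗[k] V))).flip.compl₁₂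
    ((LinearMap.llcomp k V V (H ⊗[k] V)).flip ∘ₗ ρ)
    (LinearMap.llcomp k V (H ⊗[k] V) (H ⊗[k] V) ∘ₗ LinearMap.rTensorHom V ∘ₗ
      (LinearMap.mul k H).flip))

variable {ρ : H →ₗ[k] V →ₗ[k] V} {β : V →ₗ[k] H ⊗[k] V}

@[simp] lemma tensorAct_tmul (a b : H) :
    tensorAct ρ (a ⊗ₜ[k] b) = TensorProduct.map (LinearMap.mulLeft k a) (ρ b) := rfl

@[simp] lemma homAct_tmul (a b : H) (f : V →ₗ[k] H ⊗[k] V) :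
    homAct ρ (a ⊗ₜ[k] b) f = LinearMap.rTensor V (LinearMap.mulRight k b) ∘ₗ f ∘ₗ ρ a := rfl

variable (ρ) in
lemma tensorAct_apply_of_eq_sum {ι : Type} (s : Finset ι) (h1 h2 : ι → H) {u : H ⊗[k] H}
    (hu : u = ∑ i ∈ s, h1 i ⊗ₜ[k] h2 i) (x : H ⊗[k] V) :
    tensorAct ρ u x = ∑ i ∈ s, TensorProduct.map (LinearMap.mulLeft k (h1 i)) (ρ (h2 i)) x := by
  simp [hu]

variable (ρ) in
lemma homAct_apply_of_eq_sum {ι : Type} (s : Finset ι) (h1 h2 : ι → H) {u : H ⊗[k] H}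
    (hu : u = ∑ i ∈ s, h1 i ⊗ₜ[k] h2 i) (f : V →ₗ[k] H ⊗[k] V) (v : V) :
    homAct ρ u f v
      = ∑ i ∈ s, LinearMap.rTensor V (LinearMap.mulRight k (h2 i)) (f (ρ (h1 i) v)) := by
  simp [hu]

lemma tensorAct_mul (hmul : ∀ (g h : H) (v : V), ρ (g * h) v = ρ g (ρ h v)) (u w : H ⊗[k] H) :
    tensorAct ρ (u * w) = tensorAct ρ u * tensorAct ρ w := by
  induction u using TensorProduct.induction_on with
  | zero => simp
  | add u u' hu hu' => simp [add_mul, hu, hu']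
  | tmul a b =>
    induction w using TensorProduct.induction_on with
    | zero => simp
    | add w w' hw hw' => simp [mul_add, hw, hw']
    | tmul c d =>
      rw [Algebra.TensorProduct.tmul_mul_tmul, tensorAct_tmul, tensorAct_tmul, tensorAct_tmul,
        LinearMap.mulLeft_mul, show ρ (b * d) = ρ b ∘ₗ ρ d from LinearMap.ext (hmul b d),
        TensorProduct.map_comp, Module.End.mul_eq_comp]

lemma homAct_mul (hmul : ∀ (g h : H) (v : V), ρ (g * h) v = ρ g (ρ h v)) (u w : H ⊗[k] H) :
    homAct ρ (u * w) = homAct ρ w * homAct ρ u := by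
  induction u using TensorProduct.induction_on with
  | zero => simp
  | add u u' hu hu' => simp [add_mul, hu, hu', mul_add]
  | tmul a b =>
    induction w using TensorProduct.induction_on with
    | zero => simp
    | add w w' hw hw' => simp [mul_add, hw, hw', add_mul]
    | tmul c d =>
      ext f : 1
      simp only [Algebra.TensorProduct.tmul_mul_tmul, homAct_tmul, Module.End.mul_apply,
        LinearMap.mulRight_mul, show ρ (a * c) = ρ a ∘ₗ ρ c from LinearMap.ext (hmul a c),
        LinearMap.rTensor_comp, LinearMap.comp_assoc]

lemma tensorAct_comp_rTensor_mulRight (u : H ⊗[k] H) (b : H) :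
    tensorAct ρ u ∘ₗ LinearMap.rTensor V (LinearMap.mulRight k b)
      = LinearMap.rTensor V (LinearMap.mulRight k b) ∘ₗ tensorAct ρ u := by
  induction u using TensorProduct.induction_on with
  | zero => simp
  | add u u' hu hu' => simp [LinearMap.add_comp, LinearMap.comp_add, hu, hu']
  | tmul a c =>
    ext x v
    simp [mul_assoc]

lemma homAct_tensorAct_comp (u w : H ⊗[k] H) (f : V →ₗ[k] H ⊗[k] V) :
    homAct ρ u (tensorAct ρ w ∘ₗ f) = tensorAct ρ w ∘ₗ homAct ρ u f := by
  induction u using TensorProduct.induction_on with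
  | zero => simp
  | add u u' hu hu' => simp [LinearMap.comp_add, hu, hu']
  | tmul a b =>
    simp only [homAct_tmul, ← LinearMap.comp_assoc, tensorAct_comp_rTensor_mulRight]

lemma tensorAct_conj_comp_eq_homAct (hmul : ∀ (g h : H) (v : V), ρ (g * h) v = ρ g (ρ h v))
    {w : H ⊗[k] H} (hw : tensorAct ρ w ∘ₗ β = homAct ρ w β)
    {u u' : H ⊗[k] H} (hu : u' * u = 1) :
    tensorAct ρ (u * w * u') ∘ₗ (tensorAct ρ u ∘ₗ homAct ρ u' β)
      = homAct ρ (u * w * u') (tensorAct ρ u ∘ₗ homAct ρ u' β) := by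
  have hlhs : tensorAct ρ (u * w * u') ∘ₗ tensorAct ρ u = tensorAct ρ (u * w) := by
    rw [← Module.End.mul_eq_comp, ← tensorAct_mul hmul, mul_assoc, hu, mul_one]
  calc tensorAct ρ (u * w * u') ∘ₗ (tensorAct ρ u ∘ₗ homAct ρ u' β)
      = tensorAct ρ u ∘ₗ homAct ρ u' (tensorAct ρ w ∘ₗ β) := by
        rw [← LinearMap.comp_assoc, hlhs, homAct_tensorAct_comp, tensorAct_mul hmul,
          Module.End.mul_eq_comp, LinearMap.comp_assoc]
    _ = tensorAct ρ u ∘ₗ homAct ρ (w * u') β := by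
        rw [hw, ← Module.End.mul_apply, ← homAct_mul hmul]
    _ = homAct ρ (u * w * u') (tensorAct ρ u ∘ₗ homAct ρ u' β) := by
        rw [homAct_tensorAct_comp, ← Module.End.mul_apply, ← homAct_mul hmul, ← mul_assoc,
          ← mul_assoc, hu, one_mul]

lemma IsCrossedModule.tensorAct_comul_comp (hcm : IsCrossedModule k H V ρ β) (h : H) :
    tensorAct ρ (Δ k H h) ∘ₗ β = homAct ρ (Δ k H h) β := by
  obtain ⟨s, hs⟩ := TensorProduct.exists_finset (Δ k H h)
  ext v
  rw [LinearMap.comp_apply, tensorAct_apply_of_eq_sum ρ s _ _ hs,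
    homAct_apply_of_eq_sum ρ s _ _ hs]
  exact hcm.compat h v _ s Prod.fst Prod.snd hs

lemma twistedCoaction_eq {ι₁ ι₂ : Type} (s₁ : Finset ι₁) (x1 x2 : ι₁ → H) (s₂ : Finset ι₂)
    (y1 y2 : ι₂ → H) :
    twistedCoaction k H V ρ β s₁ x1 x2 s₂ y1 y2
      = tensorAct ρ (∑ i ∈ s₁, x1 i ⊗ₜ[k] x2 i) ∘ₗ homAct ρ (∑ j ∈ s₂, y1 j ⊗ₜ[k] y2 j) β := by
  ext v
  simp only [twistedCoaction, map_sum, LinearMap.coe_sum, Finset.sum_apply, LinearMap.comp_apply,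
    tensorAct_tmul, homAct_tmul, LinearMap.map_rTensor]
  exact Finset.sum_comm

end PaperTwist

theorem statement_1_general
    {k H V : Type} [Field k] [Ring H] [HopfAlgebra k H] [AddCommGroup V] [Module k V]
    (ρ : H →ₗ[k] V →ₗ[k] V) (β : V →ₗ[k] H ⊗[k] V)
    (hcm : IsCrossedModule k H V ρ β)
    (χ χ' : H ⊗[k] H) (hχ : IsCocycle k H χ χ')
    {ι₁ ι₂ : Type} (s₁ : Finset ι₁) (x1 x2 : ι₁ → H) (s₂ : Finset ι₂) (y1 y2 : ι₂ → H)
    (hx : χ = ∑ i ∈ s₁, x1 i ⊗ₜ[k] x2 i) (hy : χ' = ∑ j ∈ s₂, y1 j ⊗ₜ[k] y2 j) :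
    ∀ (h : H) (v : V) (ι : Type) (s : Finset ι) (h1 h2 : ι → H),
      twistedComul k H χ χ' h = ∑ i ∈ s, h1 i ⊗ₜ[k] h2 i →
      ∑ i ∈ s, (TensorProduct.map (LinearMap.mulLeft k (h1 i)) (ρ (h2 i)))
          (twistedCoaction k H V ρ β s₁ x1 x2 s₂ y1 y2 v)
        = ∑ i ∈ s, (LinearMap.rTensor V (LinearMap.mulRight k (h2 i)))
            (twistedCoaction k H V ρ β s₁ x1 x2 s₂ y1 y2 (ρ (h1 i) v)) := by
  intro h v ι s h1 h2 hrep
  have hconj : twistedComul k H χ χ' h = χ * Δ k H h * χ' := by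
    simp [twistedComul, mul_assoc]
  rw [← tensorAct_apply_of_eq_sum ρ s h1 h2 hrep,
    ← homAct_apply_of_eq_sum ρ s h1 h2 hrep, twistedCoaction_eq, ← hx, ← hy, hconj,
    ← LinearMap.comp_apply (tensorAct ρ _),
    tensorAct_conj_comp_eq_homAct hcm.act_mul (hcm.tensorAct_comul_comp h) hχ.2.1]

/-- For a crossed module `(V, ρ, β)` over `H` and a counital 2-cocycle
`χ ∈ H ⊗ H` (with inverse `χ'`), the unchanged action `ρ` together with the twisted coaction
`β_χ` satisfies the crossed module compatibility over the twisted Hopf algebra `H_χ`: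
`h₍<1>₎·v₍<1>₎ ⊗ h₍<2>₎ ▷ v₍<∞>₎ = (h₍<1>₎ ▷ v)₍<1>₎·h₍<2>₎ ⊗ (h₍<1>₎ ▷ v)₍<∞>₎`,
expressed via arbitrary finite representations of the twisted coproduct `Δ_χ h`. -/
theorem statement_1
    {k H V : Type} [Field k] [Ring H] [HopfAlgebra k H] [AddCommGroup V] [Module k V]
    (hS : Function.Bijective (S k H))
    (ρ : H →ₗ[k] V →ₗ[k] V) (β : V →ₗ[k] H ⊗[k] V)
    (hcm : IsCrossedModule k H V ρ β)
    (χ χ' : H ⊗[k] H) (hχ : IsCocycle k H χ χ')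
    {ι₁ ι₂ : Type} (s₁ : Finset ι₁) (x1 x2 : ι₁ → H) (s₂ : Finset ι₂) (y1 y2 : ι₂ → H)
    (hx : χ = ∑ i ∈ s₁, x1 i ⊗ₜ[k] x2 i) (hy : χ' = ∑ j ∈ s₂, y1 j ⊗ₜ[k] y2 j) :
    ∀ (h : H) (v : V) (ι : Type) (s : Finset ι) (h1 h2 : ι → H),
      twistedComul k H χ χ' h = ∑ i ∈ s, h1 i ⊗ₜ[k] h2 i →
      ∑ i ∈ s, (TensorProduct.map (LinearMap.mulLeft k (h1 i)) (ρ (h2 i)))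
          (twistedCoaction k H V ρ β s₁ x1 x2 s₂ y1 y2 v)
        = ∑ i ∈ s, (LinearMap.rTensor V (LinearMap.mulRight k (h2 i)))
            (twistedCoaction k H V ρ β s₁ x1 x2 s₂ y1 y2 (ρ (h1 i) v)) :=
  statement_1_general ρ β hcm χ χ' hχ s₁ x1 x2 s₂ y1 y2 hx hy
end

section
/- Let (V, ▷, β_V) and (W, ▷, β_W) be crossed modules over the Hopf algebra H and χ ∈ H⊗H a counital 2-cocycle. Define c_χ : V⊗W → V⊗W by c_χ(v⊗w) = χ⁻⁽¹⁾ ▷ v ⊗ χ⁻⁽²⁾ ▷ w. Then (i) c_χ intertwines the diagonal actions: c_χ(h₍<1>₎ ▷ v ⊗ h₍<2>₎ ▷ w) = h₁ ▷ (χ⁻⁽¹⁾ ▷ v) ⊗ h₂ ▷ (χ⁻⁽²⁾ ▷ w), where Δ_χ(h) = h₍<1>₎⊗h₍<2>₎; and (ii) c_χ intertwines the coactions: writing β_χ for the twisted coaction on V, on W, and on the tensor product crossed module V⊗W (diagonal action h ▷ (v⊗w) = h₁ ▷ v ⊗ h₂ ▷ w, tensor coaction v⊗w ↦ v₍₁₎·w₍₁₎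 ⊗ v₍∞₎⊗w₍∞₎), one has β_χ^{V⊗W}(c_χ(v⊗w)) = v₍<1>₎·w₍<1>₎ ⊗ c_χ(v₍<∞>₎ ⊗ w₍<∞>₎), where β_χ^V(v) = v₍<1>₎⊗v₍<∞>₎ and β_χ^W(w) = w₍<1>₎⊗w₍<∞>₎. -/
open scoped TensorProduct
open TensorProduct LinearMap

namespace PaperTwist

variable (k H : Type) [Field k] [Ring H] [HopfAlgebra k H]

variable (V : Type) [AddCommGroup V] [Module k V]

variable (W : Type) [AddCommGroup W] [Module k W]

/-- The diagonal action of `H` on `V ⊗ W`: `h ▷ (v ⊗ w) = h₁ ▷ v ⊗ h₂ ▷ w`. -/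
noncomputable def diagAction (ρV : H →ₗ[k] V →ₗ[k] V) (ρW : H →ₗ[k] W →ₗ[k] W) :
    H →ₗ[k] V ⊗[k] W →ₗ[k] V ⊗[k] W :=
  TensorProduct.curry
    ((TensorProduct.map (TensorProduct.lift ρV) (TensorProduct.lift ρW)) ∘ₗ
      (TensorProduct.tensorTensorTensorComm k H H V W).toLinearMap ∘ₗ
      (LinearMap.rTensor (V ⊗[k] W) (Δ k H)))

/-- The tensor product coaction on `V ⊗ W`: `v ⊗ w ↦ v₍₁₎·w₍₁₎ ⊗ (v₍∞₎ ⊗ w₍∞₎)`. -/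
noncomputable def tensorCoaction (βV : V →ₗ[k] H ⊗[k] V) (βW : W →ₗ[k] H ⊗[k] W) :
    V ⊗[k] W →ₗ[k] H ⊗[k] (V ⊗[k] W) :=
  (TensorProduct.map (LinearMap.mul' k H) LinearMap.id) ∘ₗ
    (TensorProduct.tensorTensorTensorComm k H V H W).toLinearMap ∘ₗ
    (TensorProduct.map βV βW)

/-- The natural transformation `c_χ(v ⊗ w) = χ⁻⁽¹⁾ ▷ v ⊗ χ⁻⁽²⁾ ▷ w`, expressed through a
finite representation `χ⁻¹ = ∑ y1 j ⊗ y2 j`. -/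
noncomputable def cTwist (ρV : H →ₗ[k] V →ₗ[k] V) (ρW : H →ₗ[k] W →ₗ[k] W)
    {ι₂ : Type} (s₂ : Finset ι₂) (y1 y2 : ι₂ → H) :
    V ⊗[k] W →ₗ[k] V ⊗[k] W :=
  ∑ j ∈ s₂, TensorProduct.map (ρV (y1 j)) (ρW (y2 j))

end PaperTwist

open PaperTwist

namespace TwistAux

open PaperTwist

variable {k H : Type} [Field k] [Ring H] [HopfAlgebra k H]
variable {A B V W : Type} [AddCommGroup A] [Module k A] [AddCommGroup B] [Module k B]
  [AddCommGroup V] [Module k V] [AddCommGroup W] [Module k W]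

section ModTact
variable {R S : Type} [AddCommGroup R] [Module k R] [AddCommGroup S] [Module k S]

/-- Tensor action gadget. -/
noncomputable def tact (ρA : R →ₗ[k] A →ₗ[k] A) (ρB : S →ₗ[k] B →ₗ[k] B) :
    R ⊗[k] S →ₗ[k] (A ⊗[k] B →ₗ[k] A ⊗[k] B) :=
  TensorProduct.homTensorHomMap (RingHom.id k) A B A B ∘ₗ TensorProduct.map ρA ρB

@[simp] lemma tact_tmul (ρA : R →ₗ[k] A →ₗ[k] A) (ρB : S →ₗ[k] B →ₗ[k] B) (r : R) (s : S) :
    tact ρA ρB (r ⊗ₜ[k] s) = TensorProduct.map (ρA r) (ρB s) := by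
  simp [tact]
end ModTact

section AlgTact
variable {R S : Type} [Ring R] [Algebra k R] [Ring S] [Algebra k S]

lemma tact_mul {ρA : R →ₗ[k] A →ₗ[k] A} {ρB : S →ₗ[k] B →ₗ[k] B}
    (hA : ∀ r r' : R, ρA (r * r') = ρA r ∘ₗ ρA r')
    (hB : ∀ s s' : S, ρB (s * s') = ρB s ∘ₗ ρB s') (t u : R ⊗[k] S) :
    tact ρA ρB (t * u) = tact ρA ρB t ∘ₗ tact ρA ρB u := by
  induction t with
  | zero => simp
  | add a b ha hb => simp [add_mul, ha, hb, LinearMap.add_comp]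
  | tmul r s =>
    induction u with
    | zero => simp
    | add a b ha hb => simp [mul_add, ha, hb, LinearMap.comp_add]
    | tmul r' s' =>
      simp [Algebra.TensorProduct.tmul_mul_tmul, hA, hB, ← TensorProduct.map_comp]

lemma tact_apply_mul {ρA : R →ₗ[k] A →ₗ[k] A} {ρB : S →ₗ[k] B →ₗ[k] B}
    (hA : ∀ r r' : R, ρA (r * r') = ρA r ∘ₗ ρA r')
    (hB : ∀ s s' : S, ρB (s * s') = ρB s ∘ₗ ρB s') (t u : R ⊗[k] S) (x : A ⊗[k] B) :
    tact ρA ρB t (tact ρA ρB u x) = tact ρA ρB (t * u) x := by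
  rw [tact_mul hA hB]; rfl

lemma tact_one {ρA : R →ₗ[k] A →ₗ[k] A} {ρB : S →ₗ[k] B →ₗ[k] B}
    (hA : ρA 1 = LinearMap.id) (hB : ρB 1 = LinearMap.id) :
    tact ρA ρB (1 : R ⊗[k] S) = LinearMap.id := by
  rw [Algebra.TensorProduct.one_def, tact_tmul, hA, hB]
  exact TensorProduct.map_id
end AlgTact

/-- left multiplication is multiplicative in End-form -/
lemma mulL_mul (a b : H) :
    LinearMap.mul k H (a * b) = LinearMap.mul k H a ∘ₗ LinearMap.mul k H b := by
  ext x; simp [mul_assoc]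

lemma mulL_one : LinearMap.mul k H (1 : H) = LinearMap.id := by
  ext x; simp

lemma act_mul' {ρ : H →ₗ[k] V →ₗ[k] V} {β : V →ₗ[k] H ⊗[k] V}
    (hcm : IsCrossedModule k H V ρ β) (a b : H) : ρ (a * b) = ρ a ∘ₗ ρ b := by
  ext x; simp [hcm.act_mul]

lemma act_one' {ρ : H →ₗ[k] V →ₗ[k] V} {β : V →ₗ[k] H ⊗[k] V}
    (hcm : IsCrossedModule k H V ρ β) : ρ 1 = LinearMap.id := by
  ext x; simp [hcm.act_one]

/-- comul is multiplicative -/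
lemma Δ_mul (a b : H) : Δ k H (a * b) = Δ k H a * Δ k H b := by
  simpa [Δ, Bialgebra.comulAlgHom_apply] using map_mul (Bialgebra.comulAlgHom k H) a b

lemma Δ_one : Δ k H (1 : H) = 1 := by
  simpa [Δ, Bialgebra.comulAlgHom_apply] using map_one (Bialgebra.comulAlgHom k H)

lemma lTΔ_mul (t u : H ⊗[k] H) :
    LinearMap.lTensor H (Δ k H) (t * u)
      = LinearMap.lTensor H (Δ k H) t * LinearMap.lTensor H (Δ k H) u := by
  induction t with
  | zero => simp
  | add a b ha hb => simp [add_mul, ha, hb]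
  | tmul p q =>
    induction u with
    | zero => simp
    | add a b ha hb => simp [mul_add, ha, hb]
    | tmul p' q' =>
      simp [Algebra.TensorProduct.tmul_mul_tmul, Δ_mul]

lemma rTΔ_mul (t u : H ⊗[k] H) :
    LinearMap.rTensor H (Δ k H) (t * u)
      = LinearMap.rTensor H (Δ k H) t * LinearMap.rTensor H (Δ k H) u := by
  induction t with
  | zero => simp
  | add a b ha hb => simp [add_mul, ha, hb]
  | tmul p q =>
    induction u with
    | zero => simp
    | add a b ha hb => simp [mul_add, ha, hb]
    | tmul p' q' =>
      simp [Algebra.TensorProduct.tmul_mul_tmul, Δ_mul]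

lemma lTΔ_one : LinearMap.lTensor H (Δ k H) (1 : H ⊗[k] H) = 1 := by
  rw [Algebra.TensorProduct.one_def, LinearMap.lTensor_tmul, Δ_one]
  exact Algebra.TensorProduct.one_def.symm

lemma rTΔ_one : LinearMap.rTensor H (Δ k H) (1 : H ⊗[k] H) = 1 := by
  rw [Algebra.TensorProduct.one_def, LinearMap.rTensor_tmul, Δ_one]
  exact Algebra.TensorProduct.one_def.symm

lemma assoc_mul (x y : (H ⊗[k] H) ⊗[k] H) :
    TensorProduct.assoc k H H H (x * y)
      = TensorProduct.assoc k H H H x * TensorProduct.assoc k H H H y :=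
  map_mul (Algebra.TensorProduct.assoc k k k H H H) x y

lemma assoc_symm_mul (x y : H ⊗[k] (H ⊗[k] H)) :
    (TensorProduct.assoc k H H H).symm (x * y)
      = (TensorProduct.assoc k H H H).symm x * (TensorProduct.assoc k H H H).symm y :=
  map_mul (Algebra.TensorProduct.assoc k k k H H H).symm x y

end TwistAux

namespace TwistAux
variable {k H : Type} [Field k] [Ring H] [HopfAlgebra k H]
variable {V W : Type} [AddCommGroup V] [Module k V] [AddCommGroup W] [Module k W]
open PaperTwist

lemma mulRight_add' (a b : H) :
    LinearMap.mulRight k (a + b) = LinearMap.mulRight k a + LinearMap.mulRight k b := by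
  ext x; simp [mul_add]

lemma mulRight_smul' (c : k) (a : H) :
    LinearMap.mulRight k (c • a) = c • LinearMap.mulRight k a := by
  ext x; simp [Algebra.mul_smul_comm]

lemma mulL_eq_mulLeft (a : H) : LinearMap.mul k H a = LinearMap.mulLeft k a := by
  ext x; simp

/-- `Γ (p ⊗ q) u = (u ⟼ β(p ▷ u) · (1 ⊗ q))`, the right-hand side of the crossed module
compatibility. -/
noncomputable def Γ (ρ : H →ₗ[k] V →ₗ[k] V) (β : V →ₗ[k] H ⊗[k] V) :
    H ⊗[k] H →ₗ[k] V →ₗ[k] H ⊗[k] V :=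
  TensorProduct.lift <| LinearMap.mk₂ k
    (fun p q => LinearMap.rTensor V (LinearMap.mulRight k q) ∘ₗ β ∘ₗ ρ p)
    (fun p p' q => by ext u; simp [map_add])
    (fun c p q => by ext u; simp)
    (fun p q q' => by ext u; simp [mulRight_add', LinearMap.rTensor_add])
    (fun c p q => by ext u; simp [mulRight_smul', LinearMap.rTensor_smul])

@[simp] lemma Γ_tmul (ρ : H →ₗ[k] V →ₗ[k] V) (β : V →ₗ[k] H ⊗[k] V) (p q : H) (u : V) :
    Γ ρ β (p ⊗ₜ[k] q) u = LinearMap.rTensor V (LinearMap.mulRight k q) (β (ρ p u)) := by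
  simp [Γ]

lemma compat' {ρ : H →ₗ[k] V →ₗ[k] V} {β : V →ₗ[k] H ⊗[k] V}
    (hcm : IsCrossedModule k H V ρ β) (h : H) (u : V) :
    tact (LinearMap.mul k H) ρ (Δ k H h) (β u) = Γ ρ β (Δ k H h) u := by
  obtain ⟨T, hT⟩ := TensorProduct.exists_finset (Δ k H h)
  have key := hcm.compat h u (H × H) T Prod.fst Prod.snd hT
  rw [hT, map_sum, map_sum, LinearMap.sum_apply, LinearMap.sum_apply]
  simp only [tact_tmul, Γ_tmul, mulL_eq_mulLeft]
  exact key

lemma Γ_mul {ρ : H →ₗ[k] V →ₗ[k] V} {β : V →ₗ[k] H ⊗[k] V}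
    (hcm : IsCrossedModule k H V ρ β) (t : H ⊗[k] H) (p q : H) (u : V) :
    Γ ρ β (t * (p ⊗ₜ[k] q)) u
      = LinearMap.rTensor V (LinearMap.mulRight k q) (Γ ρ β t (ρ p u)) := by
  induction t with
  | zero => simp
  | add a b ha hb => simp [add_mul, ha, hb]
  | tmul p₀ q₀ =>
    simp only [Algebra.TensorProduct.tmul_mul_tmul, Γ_tmul, hcm.act_mul,
      LinearMap.mulRight_mul, LinearMap.rTensor_comp, LinearMap.comp_apply]

lemma diag_eq (ρV : H →ₗ[k] V →ₗ[k] V) (ρW : H →ₗ[k] W →ₗ[k] W) (h : H) :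
    diagAction k H V W ρV ρW h = tact ρV ρW (Δ k H h) := by
  have claim : ∀ (t : H ⊗[k] H) (u : V ⊗[k] W),
      (TensorProduct.map (TensorProduct.lift ρV) (TensorProduct.lift ρW))
        ((TensorProduct.tensorTensorTensorComm k H H V W) (t ⊗ₜ[k] u))
        = tact ρV ρW t u := by
    intro t u
    induction t with
    | zero => simp
    | add a b ha hb => simp [TensorProduct.add_tmul, ha, hb]
    | tmul p q =>
      induction u with
      | zero => simp
      | add a b ha hb => simp [TensorProduct.tmul_add, ha, hb]
      | tmul v w => simp
  refine LinearMap.ext fun u => ?_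
  simp only [diagAction, TensorProduct.curry_apply, LinearMap.comp_apply,
    LinearEquiv.coe_coe, LinearMap.rTensor_tmul]
  exact claim (Δ k H h) u

lemma diag_mul' (ρV : H →ₗ[k] V →ₗ[k] V) (βV : V →ₗ[k] H ⊗[k] V)
    (ρW : H →ₗ[k] W →ₗ[k] W) (βW : W →ₗ[k] H ⊗[k] W)
    (hcmV : IsCrossedModule k H V ρV βV) (hcmW : IsCrossedModule k H W ρW βW) (a b : H) :
    diagAction k H V W ρV ρW (a * b)
      = diagAction k H V W ρV ρW a ∘ₗ diagAction k H V W ρV ρW b := by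
  rw [diag_eq, diag_eq, diag_eq, Δ_mul, tact_mul (act_mul' hcmV) (act_mul' hcmW)]

lemma diag_one' (ρV : H →ₗ[k] V →ₗ[k] V) (βV : V →ₗ[k] H ⊗[k] V)
    (ρW : H →ₗ[k] W →ₗ[k] W) (βW : W →ₗ[k] H ⊗[k] W)
    (hcmV : IsCrossedModule k H V ρV βV) (hcmW : IsCrossedModule k H W ρW βW) :
    diagAction k H V W ρV ρW 1 = LinearMap.id := by
  rw [diag_eq, Δ_one, tact_one (act_one' hcmV) (act_one' hcmW)]

end TwistAux

namespace TwistAux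
variable {k H : Type} [Field k] [Ring H] [HopfAlgebra k H]
variable {V W : Type} [AddCommGroup V] [Module k V] [AddCommGroup W] [Module k W]
open PaperTwist

/-- The assembly map `(a ⊗ v) ⊗ (b ⊗ w) ↦ ab ⊗ (v ⊗ w)`. -/
noncomputable def Φ : ((H ⊗[k] V) ⊗[k] (H ⊗[k] W)) →ₗ[k] H ⊗[k] (V ⊗[k] W) :=
  (TensorProduct.map (LinearMap.mul' k H) LinearMap.id) ∘ₗ
    (TensorProduct.tensorTensorTensorComm k H V H W).toLinearMap

@[simp] lemma Φ_tmul (a b : H) (v : V) (w : W) :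
    (Φ (((a ⊗ₜ[k] v) ⊗ₜ[k] (b ⊗ₜ[k] w)) : (H ⊗[k] V) ⊗[k] (H ⊗[k] W)))
      = (a * b) ⊗ₜ[k] (v ⊗ₜ[k] w) := by
  simp [Φ, LinearMap.mul'_apply]

lemma tensorCoaction_eq (βV : V →ₗ[k] H ⊗[k] V) (βW : W →ₗ[k] H ⊗[k] W) (u : V ⊗[k] W) :
    tensorCoaction k H V W βV βW u = Φ (TensorProduct.map βV βW u) := rfl

lemma rT_lT_comm {B : Type} [AddCommGroup B] [Module k B]
    (f : H →ₗ[k] H) (g : B →ₗ[k] B) (X : H ⊗[k] B) :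
    LinearMap.rTensor B f (LinearMap.lTensor H g X)
      = LinearMap.lTensor H g (LinearMap.rTensor B f X) := by
  rw [← LinearMap.comp_apply, ← LinearMap.comp_apply, LinearMap.rTensor_comp_lTensor,
    LinearMap.lTensor_comp_rTensor]

lemma R1 (r : H) (E : H ⊗[k] V) (F : H ⊗[k] W) :
    LinearMap.rTensor (V ⊗[k] W) (LinearMap.mulRight k r) (Φ (E ⊗ₜ[k] F))
      = Φ (E ⊗ₜ[k] (LinearMap.rTensor W (LinearMap.mulRight k r) F)) := by
  induction E with
  | zero => simp
  | add a b ha hb => simp [TensorProduct.add_tmul, ha, hb]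
  | tmul e v =>
    induction F with
    | zero => simp
    | add a b ha hb => simp [TensorProduct.tmul_add, ha, hb]
    | tmul f w => simp [mul_assoc]

lemma R2 (q : H) (E : H ⊗[k] V) (F : H ⊗[k] W) :
    Φ (E ⊗ₜ[k] (LinearMap.rTensor W (LinearMap.mulLeft k q) F))
      = Φ ((LinearMap.rTensor V (LinearMap.mulRight k q) E) ⊗ₜ[k] F) := by
  induction E with
  | zero => simp
  | add a b ha hb => simp [TensorProduct.add_tmul, ha, hb]
  | tmul e v =>
    induction F with
    | zero => simp
    | add a b ha hb => simp [TensorProduct.tmul_add, ha, hb]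
    | tmul f w => simp [mul_assoc]

lemma R3 {S B : Type} [AddCommGroup S] [Module k S] [AddCommGroup B] [Module k B]
    (τ : S →ₗ[k] B →ₗ[k] B) (c : H ⊗[k] S) (r : H) (x : H ⊗[k] B) :
    LinearMap.rTensor B (LinearMap.mulRight k r) (tact (LinearMap.mul k H) τ c x)
      = tact (LinearMap.mul k H) τ c (LinearMap.rTensor B (LinearMap.mulRight k r) x) := by
  induction c with
  | zero => simp
  | add a b ha hb => simp only [map_add, LinearMap.add_apply, ha, hb]
  | tmul p s =>
    induction x with
    | zero => simp
    | add a b ha hb => simp only [map_add, ha, hb]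
    | tmul a b => simp [mul_assoc]

lemma R4 {ρV : H →ₗ[k] V →ₗ[k] V} {ρW : H →ₗ[k] W →ₗ[k] W} {βW : W →ₗ[k] H ⊗[k] W}
    (hcmW : IsCrossedModule k H W ρW βW)
    (t : H ⊗[k] H) (E : H ⊗[k] V) (F : H ⊗[k] W) :
    tact (LinearMap.mul k H) (tact ρV ρW)
        (TensorProduct.assoc k H H H (t ⊗ₜ[k] (1 : H))) (Φ (E ⊗ₜ[k] F))
      = Φ ((tact (LinearMap.mul k H) ρV t E) ⊗ₜ[k] F) := by
  induction t with
  | zero =>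
    rw [TensorProduct.zero_tmul, (TensorProduct.assoc k H H H).map_zero]; simp
  | add a b ha hb =>
    rw [TensorProduct.add_tmul, (TensorProduct.assoc k H H H).map_add]
    simp only [map_add, LinearMap.add_apply, ha, hb, TensorProduct.add_tmul]
  | tmul p q =>
    induction E with
    | zero => simp
    | add a b ha hb =>
      simp only [map_add, TensorProduct.add_tmul, LinearMap.add_apply, ha, hb]
    | tmul e v =>
      induction F with
      | zero => simp
      | add a b ha hb =>
        simp only [map_add, TensorProduct.tmul_add, LinearMap.add_apply, ha, hb]
      | tmul f w => simp [hcmW.act_one, mul_assoc]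

lemma R5 {ρV : H →ₗ[k] V →ₗ[k] V} {βV : V →ₗ[k] H ⊗[k] V} {ρW : H →ₗ[k] W →ₗ[k] W}
    (hcmV : IsCrossedModule k H V ρV βV)
    (r : H) (E : H ⊗[k] V) (F : H ⊗[k] W) :
    tact (LinearMap.mul k H) (tact ρV ρW)
        (((1 : H) ⊗ₜ[k] ((1 : H) ⊗ₜ[k] r)) : H ⊗[k] (H ⊗[k] H)) (Φ (E ⊗ₜ[k] F))
      = Φ (E ⊗ₜ[k] (LinearMap.lTensor H (ρW r) F)) := by
  induction E with
  | zero => simp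
  | add a b ha hb =>
    simp only [map_add, TensorProduct.add_tmul, LinearMap.add_apply, ha, hb]
  | tmul e v =>
    induction F with
    | zero => simp
    | add a b ha hb =>
      simp only [map_add, TensorProduct.tmul_add, LinearMap.add_apply, ha, hb]
    | tmul f w => simp [hcmV.act_one]

end TwistAux

namespace TwistAux
variable {k H : Type} [Field k] [Ring H] [HopfAlgebra k H]
open PaperTwist

lemma assoc_one : TensorProduct.assoc k H H H 1 = 1 :=
  map_one (Algebra.TensorProduct.assoc k k k H H H)

lemma cocgen {M : Type} [Monoid M] {L L' AR AR' X1 X1' C2 C2' : M}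
    (hC : X1 * L = C2 * AR) (hL'L : L' * L = 1)
    (hRR' : AR * AR' = 1) (hX'X : X1' * X1 = 1)
    (hCC' : C2 * C2' = 1) :
    L * AR' = X1' * C2 ∧ AR' * C2' = L' * X1' ∧ AR' * C2' * X1 = L' := by
  have s1 : L * AR' = X1' * C2 := by
    have h := congrArg (fun z => X1' * z * AR') hC
    simp only [mul_assoc] at h
    rw [← mul_assoc X1' X1, hX'X, one_mul, hRR', mul_one] at h
    exact h
  have s3 : AR' * C2' = L' * X1' := by
    have h := congrArg (fun z => L' * z * C2') s1
    simp only [mul_assoc] at h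
    rw [← mul_assoc L' L, hL'L, one_mul, hCC', mul_one] at h
    exact h
  refine ⟨s1, s3, ?_⟩
  rw [s3, mul_assoc, hX'X, mul_one]

section Coc
variable {χ χ' : H ⊗[k] H}

lemma cocAll (hχ : IsCocycle k H χ χ') :
    (LinearMap.lTensor H (Δ k H) χ * TensorProduct.assoc k H H H (LinearMap.rTensor H (Δ k H) χ')
        = ((1 : H) ⊗ₜ[k] χ') * TensorProduct.assoc k H H H (χ ⊗ₜ[k] (1 : H)))
    ∧ (TensorProduct.assoc k H H H (LinearMap.rTensor H (Δ k H) χ')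
          * TensorProduct.assoc k H H H (χ' ⊗ₜ[k] (1 : H))
        = LinearMap.lTensor H (Δ k H) χ' * ((1 : H) ⊗ₜ[k] χ'))
    ∧ (TensorProduct.assoc k H H H (LinearMap.rTensor H (Δ k H) χ')
          * TensorProduct.assoc k H H H (χ' ⊗ₜ[k] (1 : H)) * ((1 : H) ⊗ₜ[k] χ)
        = LinearMap.lTensor H (Δ k H) χ') := by
  have hC : ((1 : H) ⊗ₜ[k] χ) * LinearMap.lTensor H (Δ k H) χ
      = TensorProduct.assoc k H H H (χ ⊗ₜ[k] (1 : H))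
        * TensorProduct.assoc k H H H (LinearMap.rTensor H (Δ k H) χ) := by
    rw [← assoc_mul]; exact hχ.2.2.1
  have hL'L : LinearMap.lTensor H (Δ k H) χ' * LinearMap.lTensor H (Δ k H) χ = 1 := by
    rw [← lTΔ_mul, hχ.2.1, lTΔ_one]
  have hRR' : TensorProduct.assoc k H H H (LinearMap.rTensor H (Δ k H) χ)
      * TensorProduct.assoc k H H H (LinearMap.rTensor H (Δ k H) χ') = 1 := by
    rw [← assoc_mul, ← rTΔ_mul, hχ.1, rTΔ_one, assoc_one]
  have hX'X : ((1 : H) ⊗ₜ[k] χ') * ((1 : H) ⊗ₜ[k] χ) = 1 := by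
    rw [Algebra.TensorProduct.tmul_mul_tmul, one_mul, hχ.2.1]
    exact Algebra.TensorProduct.one_def.symm
  have hCC' : TensorProduct.assoc k H H H (χ ⊗ₜ[k] (1 : H))
      * TensorProduct.assoc k H H H (χ' ⊗ₜ[k] (1 : H)) = 1 := by
    rw [← assoc_mul, Algebra.TensorProduct.tmul_mul_tmul, hχ.1, one_mul]
    rw [show ((1 : H ⊗[k] H) ⊗ₜ[k] (1 : H)) = (1 : (H ⊗[k] H) ⊗[k] H) from
      Algebra.TensorProduct.one_def.symm, assoc_one]
  exact cocgen hC hL'L hRR' hX'X hCC'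

end Coc
end TwistAux

namespace TwistAux
variable {k H : Type} [Field k] [Ring H] [HopfAlgebra k H]
variable {V W : Type} [AddCommGroup V] [Module k V] [AddCommGroup W] [Module k W]
open PaperTwist

lemma cTwist_eq (ρV : H →ₗ[k] V →ₗ[k] V) (ρW : H →ₗ[k] W →ₗ[k] W)
    {ι₂ : Type} (s₂ : Finset ι₂) (y1 y2 : ι₂ → H) (χ' : H ⊗[k] H)
    (hy : χ' = ∑ j ∈ s₂, y1 j ⊗ₜ[k] y2 j) :
    cTwist k H V W ρV ρW s₂ y1 y2 = tact ρV ρW χ' := by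
  rw [hy, map_sum, cTwist]
  exact Finset.sum_congr rfl fun j _ => (tact_tmul ρV ρW (y1 j) (y2 j)).symm

lemma twistedComul_apply (χ χ' : H ⊗[k] H) (h : H) :
    twistedComul k H χ χ' h = χ * (Δ k H h * χ') := by
  simp [twistedComul]

lemma partI {ρV : H →ₗ[k] V →ₗ[k] V} {βV : V →ₗ[k] H ⊗[k] V}
    {ρW : H →ₗ[k] W →ₗ[k] W} {βW : W →ₗ[k] H ⊗[k] W}
    (hcmV : IsCrossedModule k H V ρV βV) (hcmW : IsCrossedModule k H W ρW βW)
    {χ χ' : H ⊗[k] H} (hχ : IsCocycle k H χ χ')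
    {ι₂ : Type} (s₂ : Finset ι₂) (y1 y2 : ι₂ → H)
    (hy : χ' = ∑ j ∈ s₂, y1 j ⊗ₜ[k] y2 j)
    (h : H) (v : V) (w : W) (ι : Type) (s : Finset ι) (h1 h2 : ι → H)
    (hrep : twistedComul k H χ χ' h = ∑ i ∈ s, h1 i ⊗ₜ[k] h2 i) :
    cTwist k H V W ρV ρW s₂ y1 y2 (∑ i ∈ s, (ρV (h1 i) v) ⊗ₜ[k] (ρW (h2 i) w))
      = diagAction k H V W ρV ρW h (cTwist k H V W ρV ρW s₂ y1 y2 (v ⊗ₜ[k] w)) := by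
  have e1 : (∑ i ∈ s, (ρV (h1 i) v) ⊗ₜ[k] (ρW (h2 i) w))
      = tact ρV ρW (twistedComul k H χ χ' h) (v ⊗ₜ[k] w) := by
    rw [hrep, map_sum, LinearMap.sum_apply]
    exact Finset.sum_congr rfl fun i _ => by simp
  rw [cTwist_eq ρV ρW s₂ y1 y2 χ' hy, e1, diag_eq,
    tact_apply_mul (act_mul' hcmV) (act_mul' hcmW),
    tact_apply_mul (act_mul' hcmV) (act_mul' hcmW)]
  congr 1
  rw [twistedComul_apply, ← mul_assoc, ← mul_assoc, hχ.2.1, one_mul]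

end TwistAux

namespace TwistAux
variable {k H : Type} [Field k] [Ring H] [HopfAlgebra k H]
variable {V W : Type} [AddCommGroup V] [Module k V] [AddCommGroup W] [Module k W]
open PaperTwist

/-- `p ↦ βV (ρV p v)`. -/
noncomputable def g1 (ρV : H →ₗ[k] V →ₗ[k] V) (βV : V →ₗ[k] H ⊗[k] V) (v : V) :
    H →ₗ[k] H ⊗[k] V := βV ∘ₗ (ρV.flip v)

@[simp] lemma g1_apply (ρV : H →ₗ[k] V →ₗ[k] V) (βV : V →ₗ[k] H ⊗[k] V) (v : V) (p : H) :
    g1 ρV βV v p = βV (ρV p v) := rfl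

/-- `Θ t = ∑ₘ (t ⊳ βW(y1 m ▷ w)) · (1 ⊗ y2 m)`. -/
noncomputable def Θm (ρW : H →ₗ[k] W →ₗ[k] W) (βW : W →ₗ[k] H ⊗[k] W) (w : W)
    {ι₂ : Type} (s₂ : Finset ι₂) (y1 y2 : ι₂ → H) : H ⊗[k] H →ₗ[k] H ⊗[k] W :=
  ∑ m ∈ s₂, (LinearMap.rTensor W (LinearMap.mulRight k (y2 m))) ∘ₗ
    ((tact (LinearMap.mul k H) ρW).flip (βW (ρW (y1 m) w)))

lemma Θm_apply (ρW : H →ₗ[k] W →ₗ[k] W) (βW : W →ₗ[k] H ⊗[k] W) (w : W)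
    {ι₂ : Type} (s₂ : Finset ι₂) (y1 y2 : ι₂ → H) (t : H ⊗[k] H) :
    Θm ρW βW w s₂ y1 y2 t = ∑ m ∈ s₂, LinearMap.rTensor W (LinearMap.mulRight k (y2 m))
      (tact (LinearMap.mul k H) ρW t (βW (ρW (y1 m) w))) := by
  simp [Θm]

lemma Θm_mulLeft {ρW : H →ₗ[k] W →ₗ[k] W} {βW : W →ₗ[k] H ⊗[k] W} (w : W)
    {ι₂ : Type} (s₂ : Finset ι₂) (y1 y2 : ι₂ → H) (q₀ q r : H) :
    Θm ρW βW w s₂ y1 y2 ((q₀ * q) ⊗ₜ[k] r)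
      = LinearMap.rTensor W (LinearMap.mulLeft k q₀) (Θm ρW βW w s₂ y1 y2 (q ⊗ₜ[k] r)) := by
  rw [Θm_apply, Θm_apply, map_sum]
  refine Finset.sum_congr rfl fun m _ => ?_
  generalize βW (ρW (y1 m) w) = G
  induction G with
  | zero => simp
  | add a b ha hb => simp only [map_add, ha, hb]
  | tmul g b => simp [mul_assoc]

lemma Θm_rho {ρW : H →ₗ[k] W →ₗ[k] W} {βW : W →ₗ[k] H ⊗[k] W}
    (hcmW : IsCrossedModule k H W ρW βW) (w : W)
    {ι₂ : Type} (s₂ : Finset ι₂) (y1 y2 : ι₂ → H) (q r : H) :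
    Θm ρW βW w s₂ y1 y2 (q ⊗ₜ[k] r)
      = LinearMap.lTensor H (ρW r) (Θm ρW βW w s₂ y1 y2 (q ⊗ₜ[k] (1 : H))) := by
  rw [Θm_apply, Θm_apply, map_sum]
  refine Finset.sum_congr rfl fun m _ => ?_
  generalize βW (ρW (y1 m) w) = G
  induction G with
  | zero => simp
  | add a b ha hb => simp only [map_add, ha, hb]
  | tmul g b => simp [hcmW.act_one]

lemma actD_eq (ρV : H →ₗ[k] V →ₗ[k] V) (ρW : H →ₗ[k] W →ₗ[k] W) (t : H ⊗[k] H) :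
    tact (LinearMap.mul k H) (diagAction k H V W ρV ρW) t
      = tact (LinearMap.mul k H) (tact ρV ρW) (LinearMap.lTensor H (Δ k H) t) := by
  induction t with
  | zero => simp
  | add a b ha hb => simp only [map_add, ha, hb]
  | tmul p q => rw [LinearMap.lTensor_tmul, tact_tmul, tact_tmul, diag_eq]

section Psi
variable (ρV : H →ₗ[k] V →ₗ[k] V) (βV : V →ₗ[k] H ⊗[k] V)
  (ρW : H →ₗ[k] W →ₗ[k] W) (βW : W →ₗ[k] H ⊗[k] W)
  (χ : H ⊗[k] H) (v : V) (w : W) {ι₂ : Type} (s₂ : Finset ι₂) (y1 y2 : ι₂ → H)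

/-- The map `Ψa (p ⊗ t) = χ ⊳ Φ (βV (p ▷ v) ⊗ Γ t w)`. -/
noncomputable def Ψa : H ⊗[k] (H ⊗[k] H) →ₗ[k] H ⊗[k] (V ⊗[k] W) :=
  (tact (LinearMap.mul k H) (diagAction k H V W ρV ρW) χ) ∘ₗ Φ ∘ₗ
    TensorProduct.map (g1 ρV βV v) ((Γ ρW βW).flip w)

lemma Ψa_tmul (p : H) (t : H ⊗[k] H) :
    Ψa ρV βV ρW βW χ v w (p ⊗ₜ[k] t)
      = tact (LinearMap.mul k H) (diagAction k H V W ρV ρW) χ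
          (Φ ((βV (ρV p v)) ⊗ₜ[k] (Γ ρW βW t w))) := by
  simp [Ψa]

/-- The map `Ψb (p ⊗ t) = χ ⊳ Φ (βV (p ▷ v) ⊗ Θ t)`. -/
noncomputable def Ψb : H ⊗[k] (H ⊗[k] H) →ₗ[k] H ⊗[k] (V ⊗[k] W) :=
  (tact (LinearMap.mul k H) (diagAction k H V W ρV ρW) χ) ∘ₗ Φ ∘ₗ
    TensorProduct.map (g1 ρV βV v) (Θm ρW βW w s₂ y1 y2)

lemma Ψb_tmul (p : H) (t : H ⊗[k] H) :
    Ψb ρV βV ρW βW χ v w s₂ y1 y2 (p ⊗ₜ[k] t)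
      = tact (LinearMap.mul k H) (diagAction k H V W ρV ρW) χ
          (Φ ((βV (ρV p v)) ⊗ₜ[k] (Θm ρW βW w s₂ y1 y2 t))) := by
  simp [Ψb]

end Psi
end TwistAux

namespace TwistAux
variable {k H : Type} [Field k] [Ring H] [HopfAlgebra k H]
variable {V W : Type} [AddCommGroup V] [Module k V] [AddCommGroup W] [Module k W]
open PaperTwist

lemma eltG1 (t : H ⊗[k] H) (r : H) :
    TensorProduct.assoc k H H H (t ⊗ₜ[k] (1 : H)) * ((1 : H) ⊗ₜ[k] ((1 : H) ⊗ₜ[k] r))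
      = TensorProduct.assoc k H H H (t ⊗ₜ[k] r) := by
  induction t with
  | zero =>
    rw [TensorProduct.zero_tmul, TensorProduct.zero_tmul,
      (TensorProduct.assoc k H H H).map_zero, zero_mul]
  | add a b ha hb =>
    rw [TensorProduct.add_tmul, TensorProduct.add_tmul,
      (TensorProduct.assoc k H H H).map_add, (TensorProduct.assoc k H H H).map_add,
      add_mul, ha, hb]
  | tmul a₁ a₂ =>
    rw [TensorProduct.assoc_tmul, TensorProduct.assoc_tmul,
      Algebra.TensorProduct.tmul_mul_tmul, Algebra.TensorProduct.tmul_mul_tmul]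
    simp

section Psi2
variable {ρV : H →ₗ[k] V →ₗ[k] V} {βV : V →ₗ[k] H ⊗[k] V}
  {ρW : H →ₗ[k] W →ₗ[k] W} {βW : W →ₗ[k] H ⊗[k] W}
  (χ : H ⊗[k] H) (v : V) (w : W) {ι₂ : Type} (s₂ : Finset ι₂) (y1 y2 : ι₂ → H)

lemma stepF_lemma (hcmV : IsCrossedModule k H V ρV βV) (t : H ⊗[k] H) (p q r : H) :
    Ψb ρV βV ρW βW χ v w s₂ y1 y2 (TensorProduct.assoc k H H H ((t * (p ⊗ₜ[k] q)) ⊗ₜ[k] r))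
      = tact (LinearMap.mul k H) (diagAction k H V W ρV ρW) χ
          (Φ ((Γ ρV βV t (ρV p v)) ⊗ₜ[k] (Θm ρW βW w s₂ y1 y2 (q ⊗ₜ[k] r)))) := by
  induction t with
  | zero =>
    rw [zero_mul, TensorProduct.zero_tmul, (TensorProduct.assoc k H H H).map_zero]
    simp
  | add a b ha hb =>
    rw [add_mul, TensorProduct.add_tmul, (TensorProduct.assoc k H H H).map_add, map_add,
      ha, hb, map_add, LinearMap.add_apply, TensorProduct.add_tmul, map_add, map_add]
  | tmul p₀ q₀ =>
    rw [Algebra.TensorProduct.tmul_mul_tmul, TensorProduct.assoc_tmul, Ψb_tmul,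
      Θm_mulLeft, R2, Γ_tmul]
    congr 3
    · exact congrArg _ (congrArg βV (hcmV.act_mul p₀ p v))

lemma finalMatch (hcmV : IsCrossedModule k H V ρV βV) (hcmW : IsCrossedModule k H W ρW βW)
    (a b c d e f : H) (E : H ⊗[k] V) (G : H ⊗[k] W) :
    ∑ o ∈ s₂, tact (LinearMap.mul k H) (tact ρV ρW)
        (a ⊗ₜ[k] ((y1 o * c) ⊗ₜ[k] (y2 o * f)))
        (Φ (E ⊗ₜ[k] (LinearMap.rTensor W (LinearMap.mulRight k e)
          (TensorProduct.map (LinearMap.mul k H (b * d)) (ρW (1 : H)) G))))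
      = TensorProduct.map (LinearMap.mul' k H) (cTwist k H V W ρV ρW s₂ y1 y2)
          ((TensorProduct.tensorTensorTensorComm k H V H W)
            ((TensorProduct.map (LinearMap.mulLeft k a ∘ₗ LinearMap.mulRight k b) (ρV c) E)
              ⊗ₜ[k]
             (TensorProduct.map (LinearMap.mulLeft k d ∘ₗ LinearMap.mulRight k e) (ρW f) G))) := by
  induction E with
  | zero => simp
  | add E₁ E₂ h₁ h₂ =>
    simp only [map_add, TensorProduct.add_tmul, LinearMap.add_apply, ← h₁, ← h₂,
      Finset.sum_add_distrib]
  | tmul e₁ v' =>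
    induction G with
    | zero => simp
    | add G₁ G₂ h₁ h₂ =>
      simp only [map_add, TensorProduct.tmul_add, LinearMap.add_apply, ← h₁, ← h₂,
        Finset.sum_add_distrib]
    | tmul g₁ w' =>
      simp only [TensorProduct.map_tmul, LinearMap.rTensor_tmul, Φ_tmul, tact_tmul,
        LinearMap.mul_apply', LinearMap.mulRight_apply, LinearMap.mulLeft_apply,
        LinearMap.comp_apply, TensorProduct.tensorTensorTensorComm_tmul,
        LinearMap.mul'_apply, cTwist, LinearMap.sum_apply, TensorProduct.tmul_sum,
        hcmV.act_mul, hcmW.act_mul, hcmW.act_one]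
      refine Finset.sum_congr rfl fun o _ => ?_
      congr 1
      rw [mul_assoc, mul_assoc, mul_assoc, mul_assoc]

end Psi2
end TwistAux

namespace TwistAux
variable {k H : Type} [Field k] [Ring H] [HopfAlgebra k H]
variable {V W : Type} [AddCommGroup V] [Module k V] [AddCommGroup W] [Module k W]
open PaperTwist

lemma S1 {B : Type} [AddCommGroup B] [Module k B] (σ : B →ₗ[k] B) (p r : H) (X : H ⊗[k] B) :
    TensorProduct.map (LinearMap.mulLeft k p ∘ₗ LinearMap.mulRight k r) σ X
      = LinearMap.rTensor B (LinearMap.mulRight k r)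
          (TensorProduct.map (LinearMap.mulLeft k p) σ X) := by
  induction X with
  | zero => simp
  | add a b ha hb => simp only [map_add, ha, hb]
  | tmul a b => simp [mul_assoc]

section Steps
variable {ρV : H →ₗ[k] V →ₗ[k] V} {βV : V →ₗ[k] H ⊗[k] V}
  {ρW : H →ₗ[k] W →ₗ[k] W} {βW : W →ₗ[k] H ⊗[k] W}
  {χ χ' : H ⊗[k] H} {v : V} {w : W} {ι₁ ι₂ : Type}
  {s₁ : Finset ι₁} {x1 x2 : ι₁ → H} {s₂ : Finset ι₂} {y1 y2 : ι₂ → H}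

lemma rTΔ_expand (hy : χ' = ∑ j ∈ s₂, y1 j ⊗ₜ[k] y2 j) :
    LinearMap.rTensor H (Δ k H) χ' = ∑ j ∈ s₂, (Δ k H (y1 j)) ⊗ₜ[k] (y2 j) := by
  rw [hy, map_sum]
  exact Finset.sum_congr rfl fun j _ => LinearMap.rTensor_tmul _ _ _ _

lemma lTΔ_expand (hy : χ' = ∑ j ∈ s₂, y1 j ⊗ₜ[k] y2 j) :
    LinearMap.lTensor H (Δ k H) χ' = ∑ j ∈ s₂, (y1 j) ⊗ₜ[k] (Δ k H (y2 j)) := by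
  rw [hy, map_sum]
  exact Finset.sum_congr rfl fun j _ => LinearMap.lTensor_tmul _ _ _ _

lemma e2 (hy : χ' = ∑ j ∈ s₂, y1 j ⊗ₜ[k] y2 j) :
    TensorProduct.assoc k H H H (LinearMap.rTensor H (Δ k H) χ')
        * TensorProduct.assoc k H H H (χ' ⊗ₜ[k] (1 : H))
      = ∑ j ∈ s₂, TensorProduct.assoc k H H H ((Δ k H (y1 j) * χ') ⊗ₜ[k] (y2 j)) := by
  rw [← assoc_mul, rTΔ_expand hy, Finset.sum_mul, ← map_sum]
  congr 1
  refine Finset.sum_congr rfl fun j _ => ?_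
  rw [Algebra.TensorProduct.tmul_mul_tmul, mul_one]

lemma e3claim (hcmV : IsCrossedModule k H V ρV βV) (hcmW : IsCrossedModule k H W ρW βW)
    (t : H ⊗[k] H) (r : H) :
    Ψa ρV βV ρW βW χ v w (TensorProduct.assoc k H H H (t ⊗ₜ[k] r))
      = LinearMap.rTensor (V ⊗[k] W) (LinearMap.mulRight k r)
          (tact (LinearMap.mul k H) (diagAction k H V W ρV ρW) χ
            (tensorCoaction k H V W βV βW (tact ρV ρW t (v ⊗ₜ[k] w)))) := by
  induction t with
  | zero =>
    rw [TensorProduct.zero_tmul, (TensorProduct.assoc k H H H).map_zero]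
    simp
  | add a b ha hb =>
    rw [TensorProduct.add_tmul, (TensorProduct.assoc k H H H).map_add, map_add, ha, hb,
      map_add, LinearMap.add_apply, map_add, map_add, ← map_add, ← map_add, ← map_add]
  | tmul p q =>
    rw [TensorProduct.assoc_tmul, Ψa_tmul, Γ_tmul]
    have h1 : tact ρV ρW (p ⊗ₜ[k] q) (v ⊗ₜ[k] w) = (ρV p v) ⊗ₜ[k] (ρW q w) := by simp
    rw [h1, tensorCoaction_eq, TensorProduct.map_tmul, R3, R1]

lemma ΓΘ (hcmW : IsCrossedModule k H W ρW βW)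
    (hy : χ' = ∑ j ∈ s₂, y1 j ⊗ₜ[k] y2 j) (h : H) :
    Γ ρW βW (Δ k H h * χ') w = Θm ρW βW w s₂ y1 y2 (Δ k H h) := by
  rw [Θm_apply, hy, Finset.mul_sum, map_sum, LinearMap.sum_apply]
  refine Finset.sum_congr rfl fun m _ => ?_
  rw [Γ_mul hcmW, compat' hcmW]

lemma step7 (hcmV : IsCrossedModule k H V ρV βV) (hcmW : IsCrossedModule k H W ρW βW)
    (hχ : IsCocycle k H χ χ')
    (hx : χ = ∑ i ∈ s₁, x1 i ⊗ₜ[k] x2 i) (hy : χ' = ∑ j ∈ s₂, y1 j ⊗ₜ[k] y2 j)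
    (E : H ⊗[k] V) (q c : H) :
    ∑ j ∈ s₂, tact (LinearMap.mul k H) (diagAction k H V W ρV ρW) χ
        (Φ ((tact (LinearMap.mul k H) ρV (Δ k H (y1 j)) E) ⊗ₜ[k]
          (Θm ρW βW w s₂ y1 y2 (q ⊗ₜ[k] (y2 j * c)))))
      = ∑ o ∈ s₂, ∑ i'' ∈ s₁, tact (LinearMap.mul k H) (tact ρV ρW)
          ((x1 i'') ⊗ₜ[k] (((y1 o * x2 i'') ⊗ₜ[k] (y2 o * c))))
          (Φ (E ⊗ₜ[k] (Θm ρW βW w s₂ y1 y2 (q ⊗ₜ[k] (1 : H))))) := by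
  have hmulH : ∀ r r' : H,
      LinearMap.mul k H (r * r') = LinearMap.mul k H r ∘ₗ LinearMap.mul k H r' := mulL_mul
  have htac : ∀ t u : H ⊗[k] H, tact ρV ρW (t * u) = tact ρV ρW t ∘ₗ tact ρV ρW u :=
    tact_mul (act_mul' hcmV) (act_mul' hcmW)
  have lhs1 : ∀ j, tact (LinearMap.mul k H) (diagAction k H V W ρV ρW) χ
        (Φ ((tact (LinearMap.mul k H) ρV (Δ k H (y1 j)) E) ⊗ₜ[k]
          (Θm ρW βW w s₂ y1 y2 (q ⊗ₜ[k] (y2 j * c)))))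
      = tact (LinearMap.mul k H) (tact ρV ρW)
          (LinearMap.lTensor H (Δ k H) χ
            * TensorProduct.assoc k H H H ((Δ k H (y1 j)) ⊗ₜ[k] (y2 j * c)))
          (Φ (E ⊗ₜ[k] (Θm ρW βW w s₂ y1 y2 (q ⊗ₜ[k] (1 : H))))) := by
    intro j
    rw [Θm_rho hcmW, actD_eq, ← R4 hcmW, ← R5 hcmV,
      tact_apply_mul hmulH htac, tact_apply_mul hmulH htac, mul_assoc, eltG1]
  rw [Finset.sum_congr rfl fun j _ => lhs1 j]
  rw [← LinearMap.sum_apply, ← map_sum, ← Finset.mul_sum, ← map_sum]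
  have hsum : (∑ j ∈ s₂, (Δ k H (y1 j)) ⊗ₜ[k] (y2 j * c))
      = LinearMap.rTensor H (Δ k H) χ' * ((1 : H ⊗[k] H) ⊗ₜ[k] c) := by
    rw [rTΔ_expand hy, Finset.sum_mul]
    refine Finset.sum_congr rfl fun j _ => ?_
    rw [Algebra.TensorProduct.tmul_mul_tmul, mul_one]
  rw [hsum, assoc_mul, ← mul_assoc, (cocAll hχ).1]
  have e7 : (((1 : H) ⊗ₜ[k] χ') * TensorProduct.assoc k H H H (χ ⊗ₜ[k] (1 : H)))
      = ∑ o ∈ s₂, ∑ i'' ∈ s₁, (x1 i'') ⊗ₜ[k] ((y1 o * x2 i'') ⊗ₜ[k] (y2 o)) := by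
    rw [hx, hy, TensorProduct.tmul_sum, TensorProduct.sum_tmul, map_sum, Finset.sum_mul_sum]
    refine Finset.sum_congr rfl fun o _ => Finset.sum_congr rfl fun i'' _ => ?_
    rw [TensorProduct.assoc_tmul, Algebra.TensorProduct.tmul_mul_tmul, one_mul,
      Algebra.TensorProduct.tmul_mul_tmul, mul_one]
  have e8 : TensorProduct.assoc k H H H ((1 : H ⊗[k] H) ⊗ₜ[k] c)
      = (1 : H) ⊗ₜ[k] ((1 : H) ⊗ₜ[k] c) := by
    rw [Algebra.TensorProduct.one_def, TensorProduct.assoc_tmul]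
  rw [e7, e8, Finset.sum_mul, map_sum, LinearMap.sum_apply]
  refine Finset.sum_congr rfl fun o _ => ?_
  rw [Finset.sum_mul, map_sum, LinearMap.sum_apply]
  refine Finset.sum_congr rfl fun i'' _ => ?_
  rw [Algebra.TensorProduct.tmul_mul_tmul, mul_one, Algebra.TensorProduct.tmul_mul_tmul,
    mul_one]

end Steps
end TwistAux

namespace TwistAux
variable {k H : Type} [Field k] [Ring H] [HopfAlgebra k H]
variable {V W : Type} [AddCommGroup V] [Module k V] [AddCommGroup W] [Module k W]
open PaperTwist

lemma partII {ρV : H →ₗ[k] V →ₗ[k] V} {βV : V →ₗ[k] H ⊗[k] V}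
    {ρW : H →ₗ[k] W →ₗ[k] W} {βW : W →ₗ[k] H ⊗[k] W}
    (hcmV : IsCrossedModule k H V ρV βV) (hcmW : IsCrossedModule k H W ρW βW)
    {χ χ' : H ⊗[k] H} (hχ : IsCocycle k H χ χ')
    {ι₁ ι₂ : Type} {s₁ : Finset ι₁} {x1 x2 : ι₁ → H} {s₂ : Finset ι₂} {y1 y2 : ι₂ → H}
    (hx : χ = ∑ i ∈ s₁, x1 i ⊗ₜ[k] x2 i) (hy : χ' = ∑ j ∈ s₂, y1 j ⊗ₜ[k] y2 j)
    (v : V) (w : W) :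
    twistedCoaction k H (V ⊗[k] W) (diagAction k H V W ρV ρW)
        (tensorCoaction k H V W βV βW) s₁ x1 x2 s₂ y1 y2
        (cTwist k H V W ρV ρW s₂ y1 y2 (v ⊗ₜ[k] w))
      = (TensorProduct.map (LinearMap.mul' k H) (cTwist k H V W ρV ρW s₂ y1 y2))
          ((TensorProduct.tensorTensorTensorComm k H V H W)
            ((twistedCoaction k H V ρV βV s₁ x1 x2 s₂ y1 y2 v) ⊗ₜ[k]
             (twistedCoaction k H W ρW βW s₁ x1 x2 s₂ y1 y2 w))) := by
  -- Step 1: reorganize the left-hand side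
  have step1 : twistedCoaction k H (V ⊗[k] W) (diagAction k H V W ρV ρW)
        (tensorCoaction k H V W βV βW) s₁ x1 x2 s₂ y1 y2
        (cTwist k H V W ρV ρW s₂ y1 y2 (v ⊗ₜ[k] w))
      = ∑ j' ∈ s₂, LinearMap.rTensor (V ⊗[k] W) (LinearMap.mulRight k (y2 j'))
          (tact (LinearMap.mul k H) (diagAction k H V W ρV ρW) χ
            (tensorCoaction k H V W βV βW
              (tact ρV ρW (Δ k H (y1 j') * χ') (v ⊗ₜ[k] w)))) := by
    simp only [twistedCoaction, LinearMap.sum_apply, LinearMap.comp_apply]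
    rw [Finset.sum_comm]
    refine Finset.sum_congr rfl fun j' _ => ?_
    have harg : diagAction k H V W ρV ρW (y1 j')
          (cTwist k H V W ρV ρW s₂ y1 y2 (v ⊗ₜ[k] w))
        = tact ρV ρW (Δ k H (y1 j') * χ') (v ⊗ₜ[k] w) := by
      rw [cTwist_eq ρV ρW s₂ y1 y2 χ' hy, diag_eq,
        tact_apply_mul (act_mul' hcmV) (act_mul' hcmW)]
    rw [harg]
    generalize (tensorCoaction k H V W βV βW
      (tact ρV ρW (Δ k H (y1 j') * χ') (v ⊗ₜ[k] w))) = X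
    have hexp : tact (LinearMap.mul k H) (diagAction k H V W ρV ρW) χ X
        = ∑ i ∈ s₁, TensorProduct.map (LinearMap.mulLeft k (x1 i))
            (diagAction k H V W ρV ρW (x2 i)) X := by
      rw [hx, map_sum, LinearMap.sum_apply]
      exact Finset.sum_congr rfl fun i _ => by rw [tact_tmul, mulL_eq_mulLeft]
    rw [hexp, map_sum]
    exact Finset.sum_congr rfl fun i _ => S1 _ _ _ X
  -- Step 2: rewrite as Ψa applied to a cocycle element
  have step2 : (∑ j' ∈ s₂, LinearMap.rTensor (V ⊗[k] W) (LinearMap.mulRight k (y2 j'))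
          (tact (LinearMap.mul k H) (diagAction k H V W ρV ρW) χ
            (tensorCoaction k H V W βV βW
              (tact ρV ρW (Δ k H (y1 j') * χ') (v ⊗ₜ[k] w)))))
      = Ψa ρV βV ρW βW χ v w
          (LinearMap.lTensor H (Δ k H) χ' * ((1 : H) ⊗ₜ[k] χ')) := by
    rw [← (cocAll hχ).2.1, e2 hy, map_sum]
    exact Finset.sum_congr rfl fun j' _ => (e3claim hcmV hcmW _ _).symm
  -- Step 3: from Ψa to Ψb via the compatibility on W
  have step3 : Ψa ρV βV ρW βW χ v w
        (LinearMap.lTensor H (Δ k H) χ' * ((1 : H) ⊗ₜ[k] χ'))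
      = Ψb ρV βV ρW βW χ v w s₂ y1 y2 (LinearMap.lTensor H (Δ k H) χ') := by
    have e4 : LinearMap.lTensor H (Δ k H) χ' * ((1 : H) ⊗ₜ[k] χ')
        = ∑ j ∈ s₂, (y1 j) ⊗ₜ[k] (Δ k H (y2 j) * χ') := by
      rw [lTΔ_expand hy, Finset.sum_mul]
      refine Finset.sum_congr rfl fun j _ => ?_
      rw [Algebra.TensorProduct.tmul_mul_tmul, mul_one]
    rw [e4, map_sum, lTΔ_expand hy, map_sum]
    refine Finset.sum_congr rfl fun j _ => ?_
    rw [Ψa_tmul, Ψb_tmul, ΓΘ hcmW hy]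
  -- Step 4/5: cocycle again and expansion
  have e9 : TensorProduct.assoc k H H H (LinearMap.rTensor H (Δ k H) χ')
        * TensorProduct.assoc k H H H (χ' ⊗ₜ[k] (1 : H)) * ((1 : H) ⊗ₜ[k] χ)
      = ∑ j ∈ s₂, ∑ n ∈ s₂, ∑ i ∈ s₁, TensorProduct.assoc k H H H
          ((Δ k H (y1 j) * ((y1 n) ⊗ₜ[k] (y2 n * x1 i))) ⊗ₜ[k] (y2 j * x2 i)) := by
    rw [e2 hy, Finset.sum_mul]
    refine Finset.sum_congr rfl fun j _ => ?_
    rw [hy, hx, Finset.mul_sum, TensorProduct.sum_tmul, map_sum, Finset.sum_mul]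
    refine Finset.sum_congr rfl fun n _ => ?_
    rw [TensorProduct.tmul_sum, Finset.mul_sum]
    refine Finset.sum_congr rfl fun i _ => ?_
    have h1 : (1 : H) ⊗ₜ[k] (x1 i ⊗ₜ[k] x2 i)
        = TensorProduct.assoc k H H H (((1 : H) ⊗ₜ[k] x1 i) ⊗ₜ[k] x2 i) :=
      (TensorProduct.assoc_tmul _ _ _).symm
    rw [h1, ← assoc_mul, Algebra.TensorProduct.tmul_mul_tmul, mul_assoc,
      Algebra.TensorProduct.tmul_mul_tmul, mul_one]
  have step45 : Ψb ρV βV ρW βW χ v w s₂ y1 y2 (LinearMap.lTensor H (Δ k H) χ')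
      = ∑ j ∈ s₂, ∑ n ∈ s₂, ∑ i ∈ s₁, Ψb ρV βV ρW βW χ v w s₂ y1 y2
          (TensorProduct.assoc k H H H
            ((Δ k H (y1 j) * ((y1 n) ⊗ₜ[k] (y2 n * x1 i))) ⊗ₜ[k] (y2 j * x2 i))) := by
    rw [← (cocAll hχ).2.2, e9, map_sum]
    refine Finset.sum_congr rfl fun j _ => ?_
    rw [map_sum]
    exact Finset.sum_congr rfl fun n _ => map_sum _ _ _
  -- Step 6: crossed module compatibility on V
  have step6 : (∑ j ∈ s₂, ∑ n ∈ s₂, ∑ i ∈ s₁, Ψb ρV βV ρW βW χ v w s₂ y1 y2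
          (TensorProduct.assoc k H H H
            ((Δ k H (y1 j) * ((y1 n) ⊗ₜ[k] (y2 n * x1 i))) ⊗ₜ[k] (y2 j * x2 i))))
      = ∑ n ∈ s₂, ∑ i ∈ s₁, ∑ j ∈ s₂,
          tact (LinearMap.mul k H) (diagAction k H V W ρV ρW) χ
            (Φ ((tact (LinearMap.mul k H) ρV (Δ k H (y1 j)) (βV (ρV (y1 n) v))) ⊗ₜ[k]
              (Θm ρW βW w s₂ y1 y2 ((y2 n * x1 i) ⊗ₜ[k] (y2 j * x2 i))))) := by
    rw [Finset.sum_comm]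
    refine Finset.sum_congr rfl fun n _ => ?_
    rw [Finset.sum_comm]
    refine Finset.sum_congr rfl fun i _ => Finset.sum_congr rfl fun j _ => ?_
    rw [stepF_lemma χ v w s₂ y1 y2 hcmV, ← compat' hcmV]
  -- Step 7: the last cocycle application
  have step7' : (∑ n ∈ s₂, ∑ i ∈ s₁, ∑ j ∈ s₂,
          tact (LinearMap.mul k H) (diagAction k H V W ρV ρW) χ
            (Φ ((tact (LinearMap.mul k H) ρV (Δ k H (y1 j)) (βV (ρV (y1 n) v))) ⊗ₜ[k]
              (Θm ρW βW w s₂ y1 y2 ((y2 n * x1 i) ⊗ₜ[k] (y2 j * x2 i))))))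
      = ∑ n ∈ s₂, ∑ i ∈ s₁, ∑ o ∈ s₂, ∑ i'' ∈ s₁,
          tact (LinearMap.mul k H) (tact ρV ρW)
            ((x1 i'') ⊗ₜ[k] (((y1 o * x2 i'') ⊗ₜ[k] (y2 o * x2 i))))
            (Φ ((βV (ρV (y1 n) v)) ⊗ₜ[k]
              (Θm ρW βW w s₂ y1 y2 ((y2 n * x1 i) ⊗ₜ[k] (1 : H))))) :=
    Finset.sum_congr rfl fun n _ => Finset.sum_congr rfl fun i _ =>
      step7 hcmV hcmW hχ hx hy (βV (ρV (y1 n) v)) (y2 n * x1 i) (x2 i)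
  -- Step 8: expand Θ and match with the right-hand side termwise
  have step8 : (∑ n ∈ s₂, ∑ i ∈ s₁, ∑ o ∈ s₂, ∑ i'' ∈ s₁,
          tact (LinearMap.mul k H) (tact ρV ρW)
            ((x1 i'') ⊗ₜ[k] (((y1 o * x2 i'') ⊗ₜ[k] (y2 o * x2 i))))
            (Φ ((βV (ρV (y1 n) v)) ⊗ₜ[k]
              (Θm ρW βW w s₂ y1 y2 ((y2 n * x1 i) ⊗ₜ[k] (1 : H))))))
      = ∑ n ∈ s₂, ∑ i ∈ s₁, ∑ i'' ∈ s₁, ∑ m ∈ s₂,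
          TensorProduct.map (LinearMap.mul' k H) (cTwist k H V W ρV ρW s₂ y1 y2)
            ((TensorProduct.tensorTensorTensorComm k H V H W)
              ((TensorProduct.map (LinearMap.mulLeft k (x1 i'') ∘ₗ LinearMap.mulRight k (y2 n))
                  (ρV (x2 i'')) (βV (ρV (y1 n) v))) ⊗ₜ[k]
               (TensorProduct.map (LinearMap.mulLeft k (x1 i) ∘ₗ LinearMap.mulRight k (y2 m))
                  (ρW (x2 i)) (βW (ρW (y1 m) w))))) := by
    refine Finset.sum_congr rfl fun n _ => Finset.sum_congr rfl fun i _ => ?_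
    have hΘ : Θm ρW βW w s₂ y1 y2 ((y2 n * x1 i) ⊗ₜ[k] (1 : H))
        = ∑ m ∈ s₂, LinearMap.rTensor W (LinearMap.mulRight k (y2 m))
            (TensorProduct.map (LinearMap.mul k H (y2 n * x1 i)) (ρW (1 : H))
              (βW (ρW (y1 m) w))) := by
      rw [Θm_apply]
      exact Finset.sum_congr rfl fun m _ => by rw [tact_tmul]
    calc (∑ o ∈ s₂, ∑ i'' ∈ s₁,
          tact (LinearMap.mul k H) (tact ρV ρW)
            ((x1 i'') ⊗ₜ[k] (((y1 o * x2 i'') ⊗ₜ[k] (y2 o * x2 i))))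
            (Φ ((βV (ρV (y1 n) v)) ⊗ₜ[k]
              (Θm ρW βW w s₂ y1 y2 ((y2 n * x1 i) ⊗ₜ[k] (1 : H))))))
        = ∑ i'' ∈ s₁, ∑ m ∈ s₂, ∑ o ∈ s₂,
            tact (LinearMap.mul k H) (tact ρV ρW)
              ((x1 i'') ⊗ₜ[k] (((y1 o * x2 i'') ⊗ₜ[k] (y2 o * x2 i))))
              (Φ ((βV (ρV (y1 n) v)) ⊗ₜ[k]
                (LinearMap.rTensor W (LinearMap.mulRight k (y2 m))
                  (TensorProduct.map (LinearMap.mul k H (y2 n * x1 i)) (ρW (1 : H))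
                    (βW (ρW (y1 m) w)))))) := by
          rw [hΘ]
          simp only [TensorProduct.tmul_sum, map_sum]
          rw [Finset.sum_comm]
          exact Finset.sum_congr rfl fun i'' _ => Finset.sum_comm
      _ = _ := by
          refine Finset.sum_congr rfl fun i'' _ => Finset.sum_congr rfl fun m _ => ?_
          exact finalMatch s₂ y1 y2 hcmV hcmW (x1 i'') (y2 n) (x2 i'') (x1 i) (y2 m) (x2 i) _ _
  -- Right-hand side expansion
  have hRHS : (TensorProduct.map (LinearMap.mul' k H) (cTwist k H V W ρV ρW s₂ y1 y2))
        ((TensorProduct.tensorTensorTensorComm k H V H W)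
          ((twistedCoaction k H V ρV βV s₁ x1 x2 s₂ y1 y2 v) ⊗ₜ[k]
           (twistedCoaction k H W ρW βW s₁ x1 x2 s₂ y1 y2 w)))
      = ∑ i'' ∈ s₁, ∑ n ∈ s₂, ∑ i ∈ s₁, ∑ m ∈ s₂,
          TensorProduct.map (LinearMap.mul' k H) (cTwist k H V W ρV ρW s₂ y1 y2)
            ((TensorProduct.tensorTensorTensorComm k H V H W)
              ((TensorProduct.map (LinearMap.mulLeft k (x1 i'') ∘ₗ LinearMap.mulRight k (y2 n))
                  (ρV (x2 i'')) (βV (ρV (y1 n) v))) ⊗ₜ[k]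
               (TensorProduct.map (LinearMap.mulLeft k (x1 i) ∘ₗ LinearMap.mulRight k (y2 m))
                  (ρW (x2 i)) (βW (ρW (y1 m) w))))) := by
    simp only [twistedCoaction, LinearMap.sum_apply, LinearMap.comp_apply,
      TensorProduct.sum_tmul, TensorProduct.tmul_sum, map_sum]
    exact ((Finset.sum_congr rfl fun a _ => Finset.sum_comm).trans Finset.sum_comm).trans
      (Finset.sum_congr rfl fun c _ =>
        (Finset.sum_congr rfl fun a _ => Finset.sum_comm).trans Finset.sum_comm)
  rw [step1, step2, step3, step45, step6, step7', step8, hRHS]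
  -- final resummation
  exact (Finset.sum_congr rfl fun n _ => Finset.sum_comm).trans Finset.sum_comm

end TwistAux

/-- For crossed modules `V, W` over `H` and a counital 2-cocycle
`χ ∈ H ⊗ H` (with inverse `χ'`), the map `c_χ(v ⊗ w) = χ⁻⁽¹⁾ ▷ v ⊗ χ⁻⁽²⁾ ▷ w`
(i) intertwines the diagonal actions:
`c_χ(h₍<1>₎ ▷ v ⊗ h₍<2>₎ ▷ w) = h₁ ▷ (χ⁻⁽¹⁾ ▷ v) ⊗ h₂ ▷ (χ⁻⁽²⁾ ▷ w)`, and
(ii) intertwines the twisted coactions: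
`β_χ^{V⊗W}(c_χ(v ⊗ w)) = v₍<1>₎·w₍<1>₎ ⊗ c_χ(v₍<∞>₎ ⊗ w₍<∞>₎)`. -/
theorem statement_3
    {k H V W : Type} [Field k] [Ring H] [HopfAlgebra k H]
    [AddCommGroup V] [Module k V] [AddCommGroup W] [Module k W]
    (hS : Function.Bijective (S k H))
    (ρV : H →ₗ[k] V →ₗ[k] V) (βV : V →ₗ[k] H ⊗[k] V)
    (ρW : H →ₗ[k] W →ₗ[k] W) (βW : W →ₗ[k] H ⊗[k] W)
    (hcmV : IsCrossedModule k H V ρV βV) (hcmW : IsCrossedModule k H W ρW βW)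
    (χ χ' : H ⊗[k] H) (hχ : IsCocycle k H χ χ')
    {ι₁ ι₂ : Type} (s₁ : Finset ι₁) (x1 x2 : ι₁ → H) (s₂ : Finset ι₂) (y1 y2 : ι₂ → H)
    (hx : χ = ∑ i ∈ s₁, x1 i ⊗ₜ[k] x2 i) (hy : χ' = ∑ j ∈ s₂, y1 j ⊗ₜ[k] y2 j) :
    (∀ (h : H) (v : V) (w : W) (ι : Type) (s : Finset ι) (h1 h2 : ι → H),
      twistedComul k H χ χ' h = ∑ i ∈ s, h1 i ⊗ₜ[k] h2 i →
      cTwist k H V W ρV ρW s₂ y1 y2 (∑ i ∈ s, (ρV (h1 i) v) ⊗ₜ[k] (ρW (h2 i) w))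
        = diagAction k H V W ρV ρW h (cTwist k H V W ρV ρW s₂ y1 y2 (v ⊗ₜ[k] w)))
    ∧ (∀ (v : V) (w : W),
      twistedCoaction k H (V ⊗[k] W) (diagAction k H V W ρV ρW)
          (tensorCoaction k H V W βV βW) s₁ x1 x2 s₂ y1 y2
          (cTwist k H V W ρV ρW s₂ y1 y2 (v ⊗ₜ[k] w))
        = (TensorProduct.map (LinearMap.mul' k H) (cTwist k H V W ρV ρW s₂ y1 y2))
            ((TensorProduct.tensorTensorTensorComm k H V H W)
              ((twistedCoaction k H V ρV βV s₁ x1 x2 s₂ y1 y2 v) ⊗ₜ[k]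
               (twistedCoaction k H W ρW βW s₁ x1 x2 s₂ y1 y2 w)))) := by
  exact ⟨fun h v w ι s h1 h2 hrep =>
      TwistAux.partI hcmV hcmW hχ s₂ y1 y2 hy h v w ι s h1 h2 hrep,
    fun v w => TwistAux.partII hcmV hcmW hχ hx hy v w⟩
end

section
/- Let (V, ▷, β_V) and (W, ▷, β_W) be crossed modules over the Hopf algebra H and χ ∈ H⊗H a counital 2-cocycle. The braiding is preserved under twisting: writing β_χ(v) = v₍<1>₎⊗v₍<∞>₎ for the twisted coaction on V, one has, for all v ∈ V, w ∈ W, χ⁻⁽¹⁾ ▷ (v₍<1>₎ ▷ w) ⊗ χ⁻⁽²⁾ ▷ v₍<∞>₎ = (χ⁻⁽¹⁾ ▷ v)₍₁₎ ▷ (χ⁻⁽²⁾ ▷ w) ⊗ (χ⁻⁽¹⁾ ▷ v)₍∞₎ (on the left one further independent copy of χ⁻¹ is summed; on the right β denotes the untwisted coaction on V). Equivalently, c_χ ∘ Ψ_χ = Ψ ∘ c_χ where Ψ(v⊗w) = v₍₁₎ ▷ w ⊗ v₍∞₎ is the crossed module braiding, Ψ_χ its analogue built from β_χ, and c_χ(v⊗w)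 = χ⁻⁽¹⁾ ▷ v ⊗ χ⁻⁽²⁾ ▷ w. -/
open scoped TensorProduct
open TensorProduct LinearMap

namespace PaperTwist

variable (k H : Type) [Field k] [Ring H] [HopfAlgebra k H]

variable (V : Type) [AddCommGroup V] [Module k V]

variable (W : Type) [AddCommGroup W] [Module k W]

/-- The crossed module braiding `Ψ(v ⊗ w) = v₍₁₎ ▷ w ⊗ v₍∞₎`, built from a coaction on `V`
and the action on `W`. -/
noncomputable def braiding (ρW : H →ₗ[k] W →ₗ[k] W) (βV : V →ₗ[k] H ⊗[k] V) :
    V ⊗[k] W →ₗ[k] W ⊗[k] V :=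
  (LinearMap.rTensor V (TensorProduct.lift ρW)) ∘ₗ
    (TensorProduct.assoc k H W V).symm.toLinearMap ∘ₗ
    (LinearMap.lTensor H (TensorProduct.comm k V W).toLinearMap) ∘ₗ
    (TensorProduct.assoc k H V W).toLinearMap ∘ₗ
    (LinearMap.rTensor W βV)

end PaperTwist

open PaperTwist

/-!
Writing `c_χ⁻¹` for the map built like `c_χ` from `χ` instead of `χ⁻¹`, the outer factors
`χ⁽¹⁾ · _ · χ⁻⁽²⁾` of `β_χ` can be moved through the action on `W`, which gives
`Ψ_χ = c_χ⁻¹ ∘ Ψ ∘ c_χ`. Since `χ⁻¹ χ = 1` and both actions are multiplicative,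
`c_χ ∘ c_χ⁻¹ = id`, and composing with `c_χ` yields `c_χ ∘ Ψ_χ = Ψ ∘ c_χ`.
-/

section Twisting

variable {k H V W : Type} [Field k] [Ring H] [HopfAlgebra k H]
  [AddCommGroup V] [Module k V] [AddCommGroup W] [Module k W]

lemma braiding_tmul (ρW : H →ₗ[k] W →ₗ[k] W) (β : V →ₗ[k] H ⊗[k] V) (v : V) (w : W) :
    braiding k H V W ρW β (v ⊗ₜ[k] w) = LinearMap.rTensor V (ρW.flip w) (β v) := by
  simp only [braiding, LinearMap.comp_apply, LinearMap.rTensor_tmul]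
  induction β v using TensorProduct.induction_on with
  | zero => simp
  | tmul h u => simp
  | add a b ha hb => simp_all [TensorProduct.add_tmul]

lemma cTwist_tmul (ρV : H →ₗ[k] V →ₗ[k] V) (ρW : H →ₗ[k] W →ₗ[k] W)
    {ι : Type} (s : Finset ι) (y1 y2 : ι → H) (v : V) (w : W) :
    cTwist k H V W ρV ρW s y1 y2 (v ⊗ₜ[k] w) = ∑ j ∈ s, ρV (y1 j) v ⊗ₜ[k] ρW (y2 j) w := by
  simp [cTwist]

lemma cTwist_comp_cTwist_of_mul_eq_one {ρV : H →ₗ[k] V →ₗ[k] V} {ρW : H →ₗ[k] W →ₗ[k] W}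
    (hV_one : ∀ v, ρV 1 v = v) (hV_mul : ∀ g h v, ρV (g * h) v = ρV g (ρV h v))
    (hW_one : ∀ w, ρW 1 w = w) (hW_mul : ∀ g h w, ρW (g * h) w = ρW g (ρW h w))
    {ι₁ ι₂ : Type} (s₁ : Finset ι₁) (x1 x2 : ι₁ → H) (s₂ : Finset ι₂) (y1 y2 : ι₂ → H)
    (h : (∑ j ∈ s₂, y1 j ⊗ₜ[k] y2 j) * (∑ i ∈ s₁, x1 i ⊗ₜ[k] x2 i) = 1) :
    cTwist k H V W ρV ρW s₂ y1 y2 ∘ₗ cTwist k H V W ρV ρW s₁ x1 x2 = LinearMap.id := by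
  ext v w
  have hsum : ∑ j ∈ s₂, ∑ i ∈ s₁, (y1 j * x1 i) ⊗ₜ[k] (y2 j * x2 i) = (1 : H ⊗[k] H) := by
    simpa only [Finset.sum_mul_sum, Algebra.TensorProduct.tmul_mul_tmul] using h
  have := congrArg (TensorProduct.map (ρV.flip v) (ρW.flip w)) hsum
  simp only [map_sum, TensorProduct.map_tmul, LinearMap.flip_apply, hV_mul, hW_mul,
    Algebra.TensorProduct.one_def, hV_one, hW_one] at this
  simpa [cTwist_tmul, Finset.sum_comm (s := s₁)] using this

lemma braiding_twistedCoaction {ρV : H →ₗ[k] V →ₗ[k] V} {ρW : H →ₗ[k] W →ₗ[k] W}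
    (hW_mul : ∀ g h w, ρW (g * h) w = ρW g (ρW h w)) (βV : V →ₗ[k] H ⊗[k] V)
    {ι₁ ι₂ : Type} (s₁ : Finset ι₁) (x1 x2 : ι₁ → H) (s₂ : Finset ι₂) (y1 y2 : ι₂ → H) :
    braiding k H V W ρW (twistedCoaction k H V ρV βV s₁ x1 x2 s₂ y1 y2)
      = cTwist k H W V ρW ρV s₁ x1 x2 ∘ₗ braiding k H V W ρW βV ∘ₗ
          cTwist k H V W ρV ρW s₂ y1 y2 := by
  refine TensorProduct.ext' fun v w => ?_
  have hterm : ∀ i j,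
      LinearMap.rTensor V (ρW.flip w) ∘ₗ
          TensorProduct.map (LinearMap.mulLeft k (x1 i) ∘ₗ LinearMap.mulRight k (y2 j)) (ρV (x2 i))
        = TensorProduct.map (ρW (x1 i)) (ρV (x2 i)) ∘ₗ
            LinearMap.rTensor V (ρW.flip (ρW (y2 j) w)) := by
    intro i j
    ext h u
    simp [hW_mul]
  simp only [LinearMap.comp_apply, braiding_tmul, twistedCoaction, cTwist, map_sum,
    LinearMap.sum_apply]
  rw [Finset.sum_comm (s := s₂)]
  refine Finset.sum_congr rfl fun i _ => Finset.sum_congr rfl fun j _ => ?_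
  simp only [TensorProduct.map_tmul, braiding_tmul]
  exact LinearMap.congr_fun (hterm i j) _

end Twisting

theorem statement_4_general
    {k H V W : Type} [Field k] [Ring H] [HopfAlgebra k H]
    [AddCommGroup V] [Module k V] [AddCommGroup W] [Module k W]
    (ρV : H →ₗ[k] V →ₗ[k] V) (βV : V →ₗ[k] H ⊗[k] V)
    (ρW : H →ₗ[k] W →ₗ[k] W) (βW : W →ₗ[k] H ⊗[k] W)
    (hcmV : IsCrossedModule k H V ρV βV) (hcmW : IsCrossedModule k H W ρW βW)
    (χ χ' : H ⊗[k] H) (hχ : IsCocycle k H χ χ')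
    {ι₁ ι₂ : Type} (s₁ : Finset ι₁) (x1 x2 : ι₁ → H) (s₂ : Finset ι₂) (y1 y2 : ι₂ → H)
    (hx : χ = ∑ i ∈ s₁, x1 i ⊗ₜ[k] x2 i) (hy : χ' = ∑ j ∈ s₂, y1 j ⊗ₜ[k] y2 j) :
    ∀ (v : V) (w : W),
      cTwist k H W V ρW ρV s₂ y1 y2
          (braiding k H V W ρW (twistedCoaction k H V ρV βV s₁ x1 x2 s₂ y1 y2) (v ⊗ₜ[k] w))
        = braiding k H V W ρW βV (cTwist k H V W ρV ρW s₂ y1 y2 (v ⊗ₜ[k] w)) := by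
  intro v w
  have hinv := cTwist_comp_cTwist_of_mul_eq_one hcmW.act_one hcmW.act_mul hcmV.act_one
    hcmV.act_mul s₁ x1 x2 s₂ y1 y2 (hy ▸ hx ▸ hχ.2.1)
  rw [braiding_twistedCoaction hcmW.act_mul,
    ← LinearMap.comp_apply (cTwist k H W V ρW ρV s₂ y1 y2), ← LinearMap.comp_assoc, hinv,
    LinearMap.id_comp, LinearMap.comp_apply]

/-- The crossed module braiding is preserved under twisting by a counital
2-cocycle `χ ∈ H ⊗ H`: `c_χ ∘ Ψ_χ = Ψ ∘ c_χ` on `V ⊗ W`, i.e. for all `v, w`,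
`χ⁻⁽¹⁾ ▷ (v₍<1>₎ ▷ w) ⊗ χ⁻⁽²⁾ ▷ v₍<∞>₎ = (χ⁻⁽¹⁾ ▷ v)₍₁₎ ▷ (χ⁻⁽²⁾ ▷ w) ⊗ (χ⁻⁽¹⁾ ▷ v)₍∞₎`,
where `Ψ_χ` is the braiding built from the twisted coaction `β_χ` on `V`. -/
theorem statement_4
    {k H V W : Type} [Field k] [Ring H] [HopfAlgebra k H]
    [AddCommGroup V] [Module k V] [AddCommGroup W] [Module k W]
    (hS : Function.Bijective (S k H))
    (ρV : H →ₗ[k] V →ₗ[k] V) (βV : V →ₗ[k] H ⊗[k] V)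
    (ρW : H →ₗ[k] W →ₗ[k] W) (βW : W →ₗ[k] H ⊗[k] W)
    (hcmV : IsCrossedModule k H V ρV βV) (hcmW : IsCrossedModule k H W ρW βW)
    (χ χ' : H ⊗[k] H) (hχ : IsCocycle k H χ χ')
    {ι₁ ι₂ : Type} (s₁ : Finset ι₁) (x1 x2 : ι₁ → H) (s₂ : Finset ι₂) (y1 y2 : ι₂ → H)
    (hx : χ = ∑ i ∈ s₁, x1 i ⊗ₜ[k] x2 i) (hy : χ' = ∑ j ∈ s₂, y1 j ⊗ₜ[k] y2 j) :
    ∀ (v : V) (w : W),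
      cTwist k H W V ρW ρV s₂ y1 y2
          (braiding k H V W ρW (twistedCoaction k H V ρV βV s₁ x1 x2 s₂ y1 y2) (v ⊗ₜ[k] w))
        = braiding k H V W ρW βV (cTwist k H V W ρV ρW s₂ y1 y2 (v ⊗ₜ[k] w)) :=
  statement_4_general ρV βV ρW βW hcmV hcmW χ χ' hχ s₁ x1 x2 s₂ y1 y2 hx hy
end

section
/- Let Ω be an H-bicovariant bimodule and χ ∈ H⊗H a counital 2-cocycle. Define (β_L)_χ : Ω → H⊗Ω by (β_L)_χ(v) = χ⁽¹⁾·v₍₁₎·χ⁻⁽¹⁾ ⊗ χ⁽²⁾·v₍∞̲₎·χ⁻⁽²⁾, where β_L(v) = v₍₁₎⊗v₍∞̲₎ (this is the conjugation χ·β_L(v)·χ⁻¹ in the H⊗H-bimodule H⊗Ω with (a⊗b)·(h⊗v)·(a′⊗b′) = a h a′ ⊗ b·v·b′). Then (β_L)_χ is counital, coassociative for the twisted coproduct Δ_χ (i.e. (Δ_χ⊗id)∘(β_L)_χ = (id⊗(β_L)_χ)∘(β_L)_χ), is a bimodule map for the unchanged bimodule structure (i.e. (β_L)_χ(h·v·g)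 = h₍<1>₎·(β_L)_χ(v)ᴴ·g₍<1>₎ ⊗ h₍<2>₎·(β_L)_χ(v)^Ω·g₍<2>₎ with Δ_χ(h) = h₍<1>₎⊗h₍<2>₎ and the appropriate legs), and commutes with the analogously twisted right coaction (β_R)_χ. -/
open scoped TensorProduct
open TensorProduct LinearMap

namespace PaperTwist

variable (k H : Type) [Field k] [Ring H] [HopfAlgebra k H]

variable (V : Type) [AddCommGroup V] [Module k V]

variable (Ω : Type) [AddCommGroup Ω] [Module k Ω]

/-- An `H`-bicovariant bimodule: an `H`-bimodule `Ω` (with left action `aL` and right action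
`aR`) together with commuting counital coassociative left and right coactions `βL, βR`
that are bimodule maps. -/
structure IsBicovariantBimodule (aL aR : H →ₗ[k] Ω →ₗ[k] Ω)
    (βL : Ω →ₗ[k] H ⊗[k] Ω) (βR : Ω →ₗ[k] Ω ⊗[k] H) : Prop where
  actL_one : ∀ v : Ω, aL 1 v = v
  actL_mul : ∀ (g h : H) (v : Ω), aL (g * h) v = aL g (aL h v)
  actR_one : ∀ v : Ω, aR 1 v = v
  actR_mul : ∀ (g h : H) (v : Ω), aR (g * h) v = aR h (aR g v)
  act_comm : ∀ (g h : H) (v : Ω), aL g (aR h v) = aR h (aL g v)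
  βL_counit : ∀ v : Ω, (TensorProduct.lid k Ω) ((LinearMap.rTensor Ω (ε k H)) (βL v)) = v
  βL_coassoc : ∀ v : Ω,
    (LinearMap.rTensor Ω (Δ k H)) (βL v)
      = (TensorProduct.assoc k H H Ω).symm ((LinearMap.lTensor H βL) (βL v))
  βR_counit : ∀ v : Ω, (TensorProduct.rid k Ω) ((LinearMap.lTensor Ω (ε k H)) (βR v)) = v
  βR_coassoc : ∀ v : Ω,
    (LinearMap.lTensor Ω (Δ k H)) (βR v)
      = (TensorProduct.assoc k Ω H H) ((LinearMap.rTensor H βR) (βR v))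
  coact_comm : ∀ v : Ω,
    (LinearMap.lTensor H βR) (βL v)
      = (TensorProduct.assoc k H Ω H) ((LinearMap.rTensor H βL) (βR v))
  βL_bimod : ∀ (h g : H) (v : Ω) (ι κ : Type) (s : Finset ι) (t : Finset κ)
      (h1 h2 : ι → H) (g1 g2 : κ → H),
    Δ k H h = ∑ i ∈ s, h1 i ⊗ₜ[k] h2 i → Δ k H g = ∑ j ∈ t, g1 j ⊗ₜ[k] g2 j →
    βL (aR g (aL h v))
      = ∑ i ∈ s, ∑ j ∈ t,
          (TensorProduct.map ((LinearMap.mulLeft k (h1 i)) ∘ₗ (LinearMap.mulRight k (g1 j)))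
            ((aR (g2 j)) ∘ₗ (aL (h2 i)))) (βL v)
  βR_bimod : ∀ (h g : H) (v : Ω) (ι κ : Type) (s : Finset ι) (t : Finset κ)
      (h1 h2 : ι → H) (g1 g2 : κ → H),
    Δ k H h = ∑ i ∈ s, h1 i ⊗ₜ[k] h2 i → Δ k H g = ∑ j ∈ t, g1 j ⊗ₜ[k] g2 j →
    βR (aR g (aL h v))
      = ∑ i ∈ s, ∑ j ∈ t,
          (TensorProduct.map ((aR (g1 j)) ∘ₗ (aL (h1 i)))
            ((LinearMap.mulLeft k (h2 i)) ∘ₗ (LinearMap.mulRight k (g2 j)))) (βR v)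

/-- The twisted left coaction `(β_L)_χ(v) = χ⁽¹⁾·v₍₁₎·χ⁻⁽¹⁾ ⊗ χ⁽²⁾·v₍∞̲₎·χ⁻⁽²⁾`,
expressed through finite representations `χ = ∑ x1 i ⊗ x2 i`, `χ⁻¹ = ∑ y1 j ⊗ y2 j`. -/
noncomputable def twistedβL (aL aR : H →ₗ[k] Ω →ₗ[k] Ω) (βL : Ω →ₗ[k] H ⊗[k] Ω)
    {ι₁ ι₂ : Type} (s₁ : Finset ι₁) (x1 x2 : ι₁ → H) (s₂ : Finset ι₂) (y1 y2 : ι₂ → H) :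
    Ω →ₗ[k] H ⊗[k] Ω :=
  ∑ i ∈ s₁, ∑ j ∈ s₂,
    (TensorProduct.map ((LinearMap.mulLeft k (x1 i)) ∘ₗ (LinearMap.mulRight k (y1 j)))
      ((aR (y2 j)) ∘ₗ (aL (x2 i)))) ∘ₗ βL

/-- The twisted right coaction `(β_R)_χ(v) = χ⁽¹⁾·v₍0̲₎·χ⁻⁽¹⁾ ⊗ χ⁽²⁾·v₍₁₎·χ⁻⁽²⁾`. -/
noncomputable def twistedβR (aL aR : H →ₗ[k] Ω →ₗ[k] Ω) (βR : Ω →ₗ[k] Ω ⊗[k] H)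
    {ι₁ ι₂ : Type} (s₁ : Finset ι₁) (x1 x2 : ι₁ → H) (s₂ : Finset ι₂) (y1 y2 : ι₂ → H) :
    Ω →ₗ[k] Ω ⊗[k] H :=
  ∑ i ∈ s₁, ∑ j ∈ s₂,
    (TensorProduct.map ((aR (y1 j)) ∘ₗ (aL (x1 i)))
      ((LinearMap.mulLeft k (x2 i)) ∘ₗ (LinearMap.mulRight k (y2 j)))) ∘ₗ βR

end PaperTwist

open PaperTwist

/-!
Regard `H ⊗ Ω` as an `H ⊗ H`-bimodule. The bimodule-map axiom for `β_L` says
`β_L(a·v·b) = Δa · β_L(v) · Δb`, and the twisted coaction is `v ↦ χ · β_L(v) · χ⁻¹`.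
Counitality follows from `(ε ⊗ id) χ^{±1} = 1`, covariance from `χ · Δh = Δ_χ h · χ`.
For coassociativity (and likewise for the commutation with `(β_R)_χ`) one moves `Δ ⊗ id` and
`id ⊗ β_L` through the actions, which turns both sides into `C · w · D` for one and the same
`w ∈ H ⊗ H ⊗ Ω`; the left factors agree by the cocycle identity for `χ`, the right ones by the
identity it implies for `χ⁻¹`.
-/

namespace PaperTwist

section Actions

variable {R A B C X Y Z A' B' X' Y' : Type*} [CommSemiring R]
  [AddCommMonoid A] [Module R A] [AddCommMonoid B] [Module R B] [AddCommMonoid C] [Module R C]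
  [AddCommMonoid A'] [Module R A'] [AddCommMonoid B'] [Module R B']
  [AddCommMonoid X] [Module R X] [AddCommMonoid Y] [Module R Y] [AddCommMonoid Z] [Module R Z]
  [AddCommMonoid X'] [Module R X'] [AddCommMonoid Y'] [Module R Y']

def Intertwines (l r : A →ₗ[R] Module.End R X) (l' r' : A' →ₗ[R] Module.End R X')
    (g : A →ₗ[R] A') (f : X →ₗ[R] X') : Prop :=
  ∀ a b x, f (l a (r b x)) = l' (g a) (r' (g b) (f x))

theorem Intertwines.id (l r : A →ₗ[R] Module.End R X) :
    Intertwines l r l r LinearMap.id LinearMap.id :=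
  fun _ _ _ => rfl

theorem Intertwines.of_tmul {l₁ r₁ : A →ₗ[R] Module.End R X} {l₂ r₂ : B →ₗ[R] Module.End R Y}
    {l r : C →ₗ[R] Module.End R Z} {g : A ⊗[R] B →ₗ[R] C} {f : X ⊗[R] Y →ₗ[R] Z}
    (h : ∀ a a' b b' x y, f (l₁ a (r₁ a' x) ⊗ₜ l₂ b (r₂ b' y))
      = l (g (a ⊗ₜ b)) (r (g (a' ⊗ₜ b')) (f (x ⊗ₜ y)))) :
    Intertwines (map₂ l₁ l₂) (map₂ r₁ r₂) l r g f := by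
  intro ξ η z
  induction ξ using TensorProduct.induction_on with
  | zero => simp
  | add ξ₁ ξ₂ h₁ h₂ => simp only [map_add, LinearMap.add_apply, h₁, h₂]
  | tmul a b =>
    induction η using TensorProduct.induction_on with
    | zero => simp
    | add η₁ η₂ h₁ h₂ => simp only [map_add, LinearMap.add_apply, h₁, h₂]
    | tmul a' b' =>
      induction z using TensorProduct.induction_on with
      | zero => simp
      | add z₁ z₂ h₁ h₂ => simp only [map_add, h₁, h₂]
      | tmul x y => exact h a a' b b' x y

theorem Intertwines.tensorMap {l₁ r₁ : A →ₗ[R] Module.End R X} {l₂ r₂ : B →ₗ[R] Module.End R Y}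
    {l₁' r₁' : A' →ₗ[R] Module.End R X'} {l₂' r₂' : B' →ₗ[R] Module.End R Y'}
    {g₁ : A →ₗ[R] A'} {g₂ : B →ₗ[R] B'} {f₁ : X →ₗ[R] X'} {f₂ : Y →ₗ[R] Y'}
    (h₁ : Intertwines l₁ r₁ l₁' r₁' g₁ f₁) (h₂ : Intertwines l₂ r₂ l₂' r₂' g₂ f₂) :
    Intertwines (map₂ l₁ l₂) (map₂ r₁ r₂) (map₂ l₁' l₂') (map₂ r₁' r₂')
      (TensorProduct.map g₁ g₂) (TensorProduct.map f₁ f₂) :=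
  .of_tmul fun a a' b b' x y => by simp [map₂_apply_tmul, h₁ a a' x, h₂ b b' y]

theorem Intertwines.lTensor {l r : A →ₗ[R] Module.End R X} {l' r' : B →ₗ[R] Module.End R Y}
    {g : A →ₗ[R] B} {f : X →ₗ[R] Y} (h : Intertwines l r l' r' g f)
    (l₀ r₀ : C →ₗ[R] Module.End R Z) :
    Intertwines (map₂ l₀ l) (map₂ r₀ r) (map₂ l₀ l') (map₂ r₀ r') (g.lTensor C) (f.lTensor Z) :=
  (Intertwines.id l₀ r₀).tensorMap h

theorem Intertwines.rTensor {l r : A →ₗ[R] Module.End R X} {l' r' : B →ₗ[R] Module.End R Y}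
    {g : A →ₗ[R] B} {f : X →ₗ[R] Y} (h : Intertwines l r l' r' g f)
    (l₀ r₀ : C →ₗ[R] Module.End R Z) :
    Intertwines (map₂ l l₀) (map₂ r r₀) (map₂ l' l₀) (map₂ r' r₀) (g.rTensor C) (f.rTensor Z) :=
  h.tensorMap (Intertwines.id l₀ r₀)

theorem map₂_assoc (l₁ : A →ₗ[R] Module.End R X) (l₂ : B →ₗ[R] Module.End R Y)
    (l₃ : C →ₗ[R] Module.End R Z) (ξ : (A ⊗[R] B) ⊗[R] C) (m : (X ⊗[R] Y) ⊗[R] Z) :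
    TensorProduct.assoc R X Y Z (map₂ (map₂ l₁ l₂) l₃ ξ m)
      = map₂ l₁ (map₂ l₂ l₃) (TensorProduct.assoc R A B C ξ) (TensorProduct.assoc R X Y Z m) := by
  induction ξ using TensorProduct.induction_on with
  | zero => simp
  | add ξ₁ ξ₂ h₁ h₂ => simp only [map_add, LinearMap.add_apply, h₁, h₂]
  | tmul p c =>
    induction p using TensorProduct.induction_on with
    | zero => simp
    | add p₁ p₂ h₁ h₂ => simp only [TensorProduct.add_tmul, map_add, LinearMap.add_apply, h₁, h₂]
    | tmul a b =>
      simp only [map₂_apply_tmul, TensorProduct.assoc_tmul]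
      exact (TensorProduct.map_map_assoc (l₁ a) (l₂ b) (l₃ c) m).symm

theorem map₂_sum_tmul_apply (l₁ r₁ : A →ₗ[R] Module.End R X) (l₂ r₂ : B →ₗ[R] Module.End R Y)
    {ι κ : Type*} (s : Finset ι) (t : Finset κ) (a : ι → A) (a' : ι → B) (b : κ → A)
    (b' : κ → B) (z : X ⊗[R] Y) :
    map₂ l₁ l₂ (∑ i ∈ s, a i ⊗ₜ a' i) (map₂ r₁ r₂ (∑ j ∈ t, b j ⊗ₜ b' j) z)
      = ∑ i ∈ s, ∑ j ∈ t, TensorProduct.map (l₁ (a i) ∘ₗ r₁ (b j)) (l₂ (a' i) ∘ₗ r₂ (b' j)) z := by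
  simp only [map_sum, LinearMap.sum_apply, map₂_apply_tmul, TensorProduct.map_comp,
    LinearMap.comp_apply]
  exact Finset.sum_comm

end Actions

section Bimodules

variable {R A B X Y : Type*} [CommSemiring R] [Semiring A] [Algebra R A] [Semiring B]
  [Algebra R B] [AddCommMonoid X] [Module R X] [AddCommMonoid Y] [Module R Y]

/-- `x ↦ l a (r b x)` is the bimodule action `x ↦ a • x • b`. -/
structure IsBimodule (l r : A →ₗ[R] Module.End R X) : Prop where
  left_one : l 1 = 1
  left_mul : ∀ a b, l (a * b) = l a * l b
  right_one : r 1 = 1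
  right_mul : ∀ a b, r (a * b) = r b * r a
  commute : ∀ a b, Commute (l a) (r b)

theorem IsBimodule.act_act {l r : A →ₗ[R] Module.End R X} (h : IsBimodule l r)
    (a b a' b' : A) (x : X) : l a (r b (l a' (r b' x))) = l (a * a') (r (b' * b) x) := by
  rw [h.left_mul, h.right_mul, Module.End.mul_apply, Module.End.mul_apply,
    ← Module.End.mul_apply (r b), ← (h.commute a' b).eq, Module.End.mul_apply]

theorem isBimodule_mul : IsBimodule (mul R A) (mul R A).flip where
  left_one := by ext; simp
  left_mul a b := by ext; simp [mul_assoc]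
  right_one := by ext; simp
  right_mul a b := by ext; simp [mul_assoc]
  commute a b := by ext; simp [mul_assoc]

theorem IsBimodule.map₂ {l₁ r₁ : A →ₗ[R] Module.End R X} {l₂ r₂ : B →ₗ[R] Module.End R Y}
    (h₁ : IsBimodule l₁ r₁) (h₂ : IsBimodule l₂ r₂) :
    IsBimodule (map₂ l₁ l₂) (map₂ r₁ r₂) where
  left_one := by
    rw [Algebra.TensorProduct.one_def, map₂_apply_tmul, h₁.left_one, h₂.left_one]
    exact TensorProduct.map_id
  left_mul ξ η := by
    induction ξ using TensorProduct.induction_on with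
    | zero => simp
    | add ξ₁ ξ₂ e₁ e₂ => simp only [add_mul, map_add, e₁, e₂]
    | tmul a b =>
      induction η using TensorProduct.induction_on with
      | zero => simp
      | add η₁ η₂ e₁ e₂ => simp only [mul_add, map_add, e₁, e₂]
      | tmul a' b' =>
        simp only [Algebra.TensorProduct.tmul_mul_tmul, map₂_apply_tmul, h₁.left_mul,
          h₂.left_mul, Module.End.mul_eq_comp, TensorProduct.map_comp]
  right_one := by
    rw [Algebra.TensorProduct.one_def, map₂_apply_tmul, h₁.right_one, h₂.right_one]
    exact TensorProduct.map_id
  right_mul ξ η := by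
    induction ξ using TensorProduct.induction_on with
    | zero => simp
    | add ξ₁ ξ₂ e₁ e₂ => simp only [add_mul, map_add, mul_add, e₁, e₂]
    | tmul a b =>
      induction η using TensorProduct.induction_on with
      | zero => simp
      | add η₁ η₂ e₁ e₂ => simp only [mul_add, map_add, add_mul, e₁, e₂]
      | tmul a' b' =>
        simp only [Algebra.TensorProduct.tmul_mul_tmul, map₂_apply_tmul, h₁.right_mul,
          h₂.right_mul, Module.End.mul_eq_comp, TensorProduct.map_comp]
  commute ξ η := by
    induction ξ using TensorProduct.induction_on with
    | zero => simp
    | add ξ₁ ξ₂ e₁ e₂ => simpa using e₁.add_left e₂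
    | tmul a b =>
      induction η using TensorProduct.induction_on with
      | zero => simp
      | add η₁ η₂ e₁ e₂ => simpa using e₁.add_right e₂
      | tmul a' b' =>
        have c₁ : l₁ a ∘ₗ r₁ a' = r₁ a' ∘ₗ l₁ a := (h₁.commute a a').eq
        have c₂ : l₂ b ∘ₗ r₂ b' = r₂ b' ∘ₗ l₂ b := (h₂.commute b b').eq
        simp only [map₂_apply_tmul, Commute, SemiconjBy, Module.End.mul_eq_comp,
          ← TensorProduct.map_comp, c₁, c₂]

theorem map₂_mul : map₂ (mul R A) (mul R B) = mul R (A ⊗[R] B) := by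
  ext
  simp

theorem map₂_mul_flip : map₂ (mul R A).flip (mul R B).flip = (mul R (A ⊗[R] B)).flip := by
  ext
  simp

theorem intertwines_algHom (φ : A →ₐ[R] B) :
    Intertwines (mul R A) (mul R A).flip (mul R B) (mul R B).flip φ.toLinearMap φ.toLinearMap :=
  fun a b x => by simp

theorem map₂_tmul_one_s6 {l₁ : A →ₗ[R] Module.End R X} {l₂ : B →ₗ[R] Module.End R Y}
    (h : l₂ 1 = 1) (a : A) : map₂ l₁ l₂ (a ⊗ₜ 1) = (l₁ a).rTensor Y := by
  rw [map₂_apply_tmul, h]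
  rfl

theorem map₂_one_tmul {l₁ : A →ₗ[R] Module.End R X} {l₂ : B →ₗ[R] Module.End R Y}
    (h : l₁ 1 = 1) (b : B) : map₂ l₁ l₂ (1 ⊗ₜ b) = (l₂ b).lTensor X := by
  rw [map₂_apply_tmul, h]
  rfl

end Bimodules

section Hopf

variable {k H Ω : Type} [Field k] [Ring H] [HopfAlgebra k H] [AddCommGroup Ω] [Module k Ω]

theorem intertwines_comul :
    Intertwines (mul k H) (mul k H).flip (map₂ (mul k H) (mul k H))
      (map₂ (mul k H).flip (mul k H).flip) (Δ k H) (Δ k H) := by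
  rw [map₂_mul, map₂_mul_flip]
  exact intertwines_algHom (Bialgebra.comulAlgHom k H)

theorem intertwines_lid_rTensor_counit (l r : H →ₗ[k] Module.End k Ω) :
    Intertwines (map₂ (mul k H) l) (map₂ (mul k H).flip r) l r
      ((TensorProduct.lid k H).toLinearMap ∘ₗ (ε k H).rTensor H)
      ((TensorProduct.lid k Ω).toLinearMap ∘ₗ (ε k H).rTensor Ω) :=
  .of_tmul fun a a' b b' h x => by
    simp [ε, Bialgebra.counit_mul, mul_smul, smul_comm (Coalgebra.counit a : k)]

variable {χ χ' : H ⊗[k] H}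

theorem IsCocycle.counit_inv (hχ : IsCocycle k H χ χ') :
    TensorProduct.lid k H ((ε k H).rTensor H χ') = 1 := by
  obtain ⟨hχχ', -, -, hcounit, -⟩ := hχ
  let e := (Algebra.TensorProduct.lid k H).toAlgHom.comp
    (Algebra.TensorProduct.map (Bialgebra.counitAlgHom k H) (AlgHom.id k H))
  change e χ = 1 at hcounit
  change e χ' = 1
  simpa [hcounit] using congrArg e hχχ'

theorem IsCocycle.inv_cocycle (hχ : IsCocycle k H χ χ') :
    (Δ k H).lTensor H χ' * (1 ⊗ₜ χ')
      = TensorProduct.assoc k H H H ((Δ k H).rTensor H χ' * (χ' ⊗ₜ 1)) := by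
  obtain ⟨hχχ', hχ'χ, hcocycle, -, -⟩ := hχ
  let ΔL := Algebra.TensorProduct.map (AlgHom.id k H) (Bialgebra.comulAlgHom k H)
  let ΔR := Algebra.TensorProduct.map (Bialgebra.comulAlgHom k H) (AlgHom.id k H)
  let α := Algebra.TensorProduct.assoc k k k H H H
  change (1 ⊗ₜ χ) * ΔL χ = α ((χ ⊗ₜ 1) * ΔR χ) at hcocycle
  change ΔL χ' * (1 ⊗ₜ χ') = α (ΔR χ' * (χ' ⊗ₜ 1))
  have right_inv : ((1 ⊗ₜ χ) * ΔL χ) * (ΔL χ' * (1 ⊗ₜ χ')) = 1 := by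
    rw [mul_assoc, ← mul_assoc (ΔL χ), ← map_mul, hχχ', map_one, one_mul,
      Algebra.TensorProduct.tmul_mul_tmul, hχχ', one_mul, ← Algebra.TensorProduct.one_def]
  have left_inv : α (ΔR χ' * (χ' ⊗ₜ 1)) * α ((χ ⊗ₜ 1) * ΔR χ) = 1 := by
    rw [← map_mul, mul_assoc, ← mul_assoc (χ' ⊗ₜ 1), Algebra.TensorProduct.tmul_mul_tmul, hχ'χ,
      one_mul, ← Algebra.TensorProduct.one_def, one_mul, ← map_mul, hχ'χ, map_one, map_one]
  exact (left_inv_eq_right_inv left_inv (hcocycle ▸ right_inv)).symm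

end Hopf

section Bicovariant

variable {k H Ω : Type} [Field k] [Ring H] [HopfAlgebra k H] [AddCommGroup Ω] [Module k Ω]
  {aL aR : H →ₗ[k] Ω →ₗ[k] Ω} {βL : Ω →ₗ[k] H ⊗[k] Ω} {βR : Ω →ₗ[k] Ω ⊗[k] H}

/- `twistedβL`, `twistedβR` and the covariance axioms spell out
`(∑ aᵢ ⊗ a'ᵢ) · z · (∑ bⱼ ⊗ b'ⱼ)` term by term; these lemmas identify it with the `map₂` action. -/
theorem sum_map_mulLeft_mulRight_act (hΩ : IsBimodule aL aR) {ι κ : Type*} (s : Finset ι)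
    (t : Finset κ) (a a' : ι → H) (b b' : κ → H) (z : H ⊗[k] Ω) :
    ∑ i ∈ s, ∑ j ∈ t, TensorProduct.map (LinearMap.mulLeft k (a i) ∘ₗ LinearMap.mulRight k (b j))
        (aR (b' j) ∘ₗ aL (a' i)) z
      = map₂ (mul k H) aL (∑ i ∈ s, a i ⊗ₜ a' i)
          (map₂ (mul k H).flip aR (∑ j ∈ t, b j ⊗ₜ b' j) z) := by
  rw [map₂_sum_tmul_apply]
  simp only [← Module.End.mul_eq_comp, (hΩ.commute _ _).eq]
  rfl

theorem sum_map_act_mulLeft_mulRight (hΩ : IsBimodule aL aR) {ι κ : Type*} (s : Finset ι)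
    (t : Finset κ) (a a' : ι → H) (b b' : κ → H) (z : Ω ⊗[k] H) :
    ∑ i ∈ s, ∑ j ∈ t, TensorProduct.map (aR (b j) ∘ₗ aL (a i))
        (LinearMap.mulLeft k (a' i) ∘ₗ LinearMap.mulRight k (b' j)) z
      = map₂ aL (mul k H) (∑ i ∈ s, a i ⊗ₜ a' i)
          (map₂ aR (mul k H).flip (∑ j ∈ t, b j ⊗ₜ b' j) z) := by
  rw [map₂_sum_tmul_apply]
  simp only [← Module.End.mul_eq_comp, (hΩ.commute _ _).eq]
  rfl

namespace IsBicovariantBimodule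

variable (hB : IsBicovariantBimodule k H Ω aL aR βL βR)
include hB

theorem isBimodule : IsBimodule aL aR where
  left_one := LinearMap.ext hB.actL_one
  left_mul a b := LinearMap.ext (hB.actL_mul a b)
  right_one := LinearMap.ext hB.actR_one
  right_mul a b := LinearMap.ext (hB.actR_mul a b)
  commute a b := LinearMap.ext (hB.act_comm a b)

theorem intertwines_βL :
    Intertwines aL aR (map₂ (mul k H) aL) (map₂ (mul k H).flip aR) (Δ k H) βL := by
  intro a b v
  obtain ⟨sa, hsa⟩ := TensorProduct.exists_finset (Δ k H a)
  obtain ⟨sb, hsb⟩ := TensorProduct.exists_finset (Δ k H b)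
  rw [hB.act_comm, hB.βL_bimod a b v _ _ sa sb _ _ _ _ hsa hsb,
    sum_map_mulLeft_mulRight_act hB.isBimodule, ← hsa, ← hsb]

theorem intertwines_βR :
    Intertwines aL aR (map₂ aL (mul k H)) (map₂ aR (mul k H).flip) (Δ k H) βR := by
  intro a b v
  obtain ⟨sa, hsa⟩ := TensorProduct.exists_finset (Δ k H a)
  obtain ⟨sb, hsb⟩ := TensorProduct.exists_finset (Δ k H b)
  rw [hB.act_comm, hB.βR_bimod a b v _ _ sa sb _ _ _ _ hsa hsb,
    sum_map_act_mulLeft_mulRight hB.isBimodule, ← hsa, ← hsb]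

end IsBicovariantBimodule

variable {χ χ' : H ⊗[k] H}
  {ι₁ ι₂ : Type} {s₁ : Finset ι₁} {x1 x2 : ι₁ → H} {s₂ : Finset ι₂} {y1 y2 : ι₂ → H}

theorem twistedComul_eq :
    twistedComul k H χ χ'
      = map₂ (mul k H) (mul k H) χ ∘ₗ map₂ (mul k H).flip (mul k H).flip χ' ∘ₗ Δ k H := by
  rw [map₂_mul, map₂_mul_flip]
  rfl

theorem twistedβL_eq (hΩ : IsBimodule aL aR) (hx : χ = ∑ i ∈ s₁, x1 i ⊗ₜ[k] x2 i)
    (hy : χ' = ∑ j ∈ s₂, y1 j ⊗ₜ[k] y2 j) :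
    twistedβL k H Ω aL aR βL s₁ x1 x2 s₂ y1 y2
      = map₂ (mul k H) aL χ ∘ₗ map₂ (mul k H).flip aR χ' ∘ₗ βL := by
  ext v
  simp only [twistedβL, LinearMap.sum_apply, LinearMap.comp_apply, hx, hy]
  exact sum_map_mulLeft_mulRight_act hΩ s₁ s₂ x1 x2 y1 y2 (βL v)

theorem twistedβR_eq (hΩ : IsBimodule aL aR) (hx : χ = ∑ i ∈ s₁, x1 i ⊗ₜ[k] x2 i)
    (hy : χ' = ∑ j ∈ s₂, y1 j ⊗ₜ[k] y2 j) :
    twistedβR k H Ω aL aR βR s₁ x1 x2 s₂ y1 y2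
      = map₂ aL (mul k H) χ ∘ₗ map₂ aR (mul k H).flip χ' ∘ₗ βR := by
  ext v
  simp only [twistedβR, LinearMap.sum_apply, LinearMap.comp_apply, hx, hy]
  exact sum_map_act_mulLeft_mulRight hΩ s₁ s₂ x1 x2 y1 y2 (βR v)

variable (hB : IsBicovariantBimodule k H Ω aL aR βL βR) (hχ : IsCocycle k H χ χ')
  (hx : χ = ∑ i ∈ s₁, x1 i ⊗ₜ[k] x2 i) (hy : χ' = ∑ j ∈ s₂, y1 j ⊗ₜ[k] y2 j)
include hB hχ hx hy

theorem twistedβL_counit (v : Ω) :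
    TensorProduct.lid k Ω ((ε k H).rTensor Ω (twistedβL k H Ω aL aR βL s₁ x1 x2 s₂ y1 y2 v))
      = v := by
  have hcounit_inv := hχ.counit_inv
  obtain ⟨-, -, -, hcounit, -⟩ := hχ
  have hΩ := hB.isBimodule
  have counit_act := intertwines_lid_rTensor_counit aL aR χ χ' (βL v)
  simp only [LinearMap.comp_apply, LinearEquiv.coe_coe] at counit_act
  rw [twistedβL_eq hΩ hx hy, LinearMap.comp_apply, LinearMap.comp_apply, counit_act, hcounit,
    hcounit_inv, hB.βL_counit, hΩ.left_one, hΩ.right_one]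
  rfl

theorem twistedβL_coassoc (v : Ω) :
    (twistedComul k H χ χ').rTensor Ω (twistedβL k H Ω aL aR βL s₁ x1 x2 s₂ y1 y2 v)
      = (TensorProduct.assoc k H H Ω).symm
          ((twistedβL k H Ω aL aR βL s₁ x1 x2 s₂ y1 y2).lTensor H
            (twistedβL k H Ω aL aR βL s₁ x1 x2 s₂ y1 y2 v)) := by
  have hΩ := hB.isBimodule
  have hH := isBimodule_mul (R := k) (A := H)
  have hcocycle_inv := hχ.inv_cocycle
  obtain ⟨-, -, hcocycle, -, -⟩ := hχ
  rw [twistedβL_eq hΩ hx hy, twistedComul_eq]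
  simp only [LinearMap.rTensor_comp, LinearMap.lTensor_comp, LinearMap.comp_apply]
  rw [← map₂_tmul_one_s6 hΩ.left_one, ← map₂_tmul_one_s6 hΩ.right_one, ← map₂_one_tmul hH.left_one,
    ← map₂_one_tmul hH.right_one, intertwines_comul.rTensor aL aR,
    hB.intertwines_βL.lTensor (mul k H) (mul k H).flip, ((hH.map₂ hH).map₂ hΩ).act_act,
    (hH.map₂ (hH.map₂ hΩ)).act_act, hcocycle, hcocycle_inv, hB.βL_coassoc]
  apply (TensorProduct.assoc k H H Ω).injective
  rw [LinearEquiv.apply_symm_apply, map₂_assoc, map₂_assoc, LinearEquiv.apply_symm_apply]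

theorem twistedβL_aR_aL (h g : H) (v : Ω) {ι κ : Type} (s : Finset ι) (t : Finset κ)
    (h1 h2 : ι → H) (g1 g2 : κ → H) (hh : twistedComul k H χ χ' h = ∑ i ∈ s, h1 i ⊗ₜ[k] h2 i)
    (hg : twistedComul k H χ χ' g = ∑ j ∈ t, g1 j ⊗ₜ[k] g2 j) :
    twistedβL k H Ω aL aR βL s₁ x1 x2 s₂ y1 y2 (aR g (aL h v))
      = ∑ i ∈ s, ∑ j ∈ t,
          TensorProduct.map (LinearMap.mulLeft k (h1 i) ∘ₗ LinearMap.mulRight k (g1 j))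
            (aR (g2 j) ∘ₗ aL (h2 i)) (twistedβL k H Ω aL aR βL s₁ x1 x2 s₂ y1 y2 v) := by
  obtain ⟨-, hχ'χ, -, -, -⟩ := hχ
  have hΩ := hB.isBimodule
  have hM := (isBimodule_mul (R := k) (A := H)).map₂ hΩ
  have twist_left : χ * Δ k H h = twistedComul k H χ χ' h * χ := by
    simp only [twistedComul, LinearMap.comp_apply, LinearMap.mulLeft_apply,
      LinearMap.mulRight_apply, mul_assoc, hχ'χ, mul_one]
  have twist_right : Δ k H g * χ' = χ' * twistedComul k H χ χ' g := by
    simp only [twistedComul, LinearMap.comp_apply, LinearMap.mulLeft_apply,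
      LinearMap.mulRight_apply, ← mul_assoc, hχ'χ, one_mul]
  rw [sum_map_mulLeft_mulRight_act hΩ, ← hh, ← hg, twistedβL_eq hΩ hx hy]
  simp only [LinearMap.comp_apply]
  rw [← hB.act_comm, hB.intertwines_βL, hM.act_act, hM.act_act, twist_left, twist_right]

theorem twistedβL_comm_twistedβR (v : Ω) :
    (twistedβR k H Ω aL aR βR s₁ x1 x2 s₂ y1 y2).lTensor H
        (twistedβL k H Ω aL aR βL s₁ x1 x2 s₂ y1 y2 v)
      = TensorProduct.assoc k H Ω H ((twistedβL k H Ω aL aR βL s₁ x1 x2 s₂ y1 y2).rTensor H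
          (twistedβR k H Ω aL aR βR s₁ x1 x2 s₂ y1 y2 v)) := by
  have hΩ := hB.isBimodule
  have hH := isBimodule_mul (R := k) (A := H)
  have hcocycle_inv := hχ.inv_cocycle
  obtain ⟨-, -, hcocycle, -, -⟩ := hχ
  rw [twistedβL_eq hΩ hx hy, twistedβR_eq hΩ hx hy]
  simp only [LinearMap.rTensor_comp, LinearMap.lTensor_comp, LinearMap.comp_apply]
  rw [← map₂_tmul_one_s6 hH.left_one, ← map₂_tmul_one_s6 hH.right_one, ← map₂_one_tmul hH.left_one,
    ← map₂_one_tmul hH.right_one, hB.intertwines_βR.lTensor (mul k H) (mul k H).flip,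
    hB.intertwines_βL.rTensor (mul k H) (mul k H).flip, ((hH.map₂ hΩ).map₂ hH).act_act,
    (hH.map₂ (hΩ.map₂ hH)).act_act, hcocycle, hcocycle_inv, hB.coact_comm, map₂_assoc,
    map₂_assoc]

end Bicovariant

end PaperTwist

theorem statement_6_general
    {k H Ω : Type} [Field k] [Ring H] [HopfAlgebra k H] [AddCommGroup Ω] [Module k Ω]
    (aL aR : H →ₗ[k] Ω →ₗ[k] Ω) (βL : Ω →ₗ[k] H ⊗[k] Ω) (βR : Ω →ₗ[k] Ω ⊗[k] H)
    (hB : IsBicovariantBimodule k H Ω aL aR βL βR)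
    (χ χ' : H ⊗[k] H) (hχ : IsCocycle k H χ χ')
    {ι₁ ι₂ : Type} (s₁ : Finset ι₁) (x1 x2 : ι₁ → H) (s₂ : Finset ι₂) (y1 y2 : ι₂ → H)
    (hx : χ = ∑ i ∈ s₁, x1 i ⊗ₜ[k] x2 i) (hy : χ' = ∑ j ∈ s₂, y1 j ⊗ₜ[k] y2 j) :
    (∀ v : Ω, (TensorProduct.lid k Ω)
        ((LinearMap.rTensor Ω (ε k H)) (twistedβL k H Ω aL aR βL s₁ x1 x2 s₂ y1 y2 v)) = v)
    ∧ (∀ v : Ω,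
        (LinearMap.rTensor Ω (twistedComul k H χ χ'))
            (twistedβL k H Ω aL aR βL s₁ x1 x2 s₂ y1 y2 v)
          = (TensorProduct.assoc k H H Ω).symm
              ((LinearMap.lTensor H (twistedβL k H Ω aL aR βL s₁ x1 x2 s₂ y1 y2))
                (twistedβL k H Ω aL aR βL s₁ x1 x2 s₂ y1 y2 v)))
    ∧ (∀ (h g : H) (v : Ω) (ι κ : Type) (s : Finset ι) (t : Finset κ)
        (h1 h2 : ι → H) (g1 g2 : κ → H),
        twistedComul k H χ χ' h = ∑ i ∈ s, h1 i ⊗ₜ[k] h2 i →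
        twistedComul k H χ χ' g = ∑ j ∈ t, g1 j ⊗ₜ[k] g2 j →
        twistedβL k H Ω aL aR βL s₁ x1 x2 s₂ y1 y2 (aR g (aL h v))
          = ∑ i ∈ s, ∑ j ∈ t,
              (TensorProduct.map
                ((LinearMap.mulLeft k (h1 i)) ∘ₗ (LinearMap.mulRight k (g1 j)))
                ((aR (g2 j)) ∘ₗ (aL (h2 i))))
                (twistedβL k H Ω aL aR βL s₁ x1 x2 s₂ y1 y2 v))
    ∧ (∀ v : Ω,
        (LinearMap.lTensor H (twistedβR k H Ω aL aR βR s₁ x1 x2 s₂ y1 y2))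
            (twistedβL k H Ω aL aR βL s₁ x1 x2 s₂ y1 y2 v)
          = (TensorProduct.assoc k H Ω H)
              ((LinearMap.rTensor H (twistedβL k H Ω aL aR βL s₁ x1 x2 s₂ y1 y2))
                (twistedβR k H Ω aL aR βR s₁ x1 x2 s₂ y1 y2 v))) :=
  ⟨twistedβL_counit hB hχ hx hy, twistedβL_coassoc hB hχ hx hy,
    fun h g v _ _ s t h1 h2 g1 g2 => twistedβL_aR_aL hB hχ hx hy h g v s t h1 h2 g1 g2,
    twistedβL_comm_twistedβR hB hχ hx hy⟩

/-- For an `H`-bicovariant bimodule `Ω` and a counital 2-cocycle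
`χ ∈ H ⊗ H` (with inverse `χ'`), the twisted left coaction `(β_L)_χ = χ·β_L(·)·χ⁻¹` is
counital, coassociative for the twisted coproduct `Δ_χ`, a bimodule map for the unchanged
bimodule structure (with `Δ_χ` governing the covariance), and commutes with the analogously
twisted right coaction `(β_R)_χ`. -/
theorem statement_6
    {k H Ω : Type} [Field k] [Ring H] [HopfAlgebra k H] [AddCommGroup Ω] [Module k Ω]
    (hS : Function.Bijective (S k H))
    (aL aR : H →ₗ[k] Ω →ₗ[k] Ω) (βL : Ω →ₗ[k] H ⊗[k] Ω) (βR : Ω →ₗ[k] Ω ⊗[k] H)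
    (hB : IsBicovariantBimodule k H Ω aL aR βL βR)
    (χ χ' : H ⊗[k] H) (hχ : IsCocycle k H χ χ')
    {ι₁ ι₂ : Type} (s₁ : Finset ι₁) (x1 x2 : ι₁ → H) (s₂ : Finset ι₂) (y1 y2 : ι₂ → H)
    (hx : χ = ∑ i ∈ s₁, x1 i ⊗ₜ[k] x2 i) (hy : χ' = ∑ j ∈ s₂, y1 j ⊗ₜ[k] y2 j) :
    (∀ v : Ω, (TensorProduct.lid k Ω)
        ((LinearMap.rTensor Ω (ε k H)) (twistedβL k H Ω aL aR βL s₁ x1 x2 s₂ y1 y2 v)) = v)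
    ∧ (∀ v : Ω,
        (LinearMap.rTensor Ω (twistedComul k H χ χ'))
            (twistedβL k H Ω aL aR βL s₁ x1 x2 s₂ y1 y2 v)
          = (TensorProduct.assoc k H H Ω).symm
              ((LinearMap.lTensor H (twistedβL k H Ω aL aR βL s₁ x1 x2 s₂ y1 y2))
                (twistedβL k H Ω aL aR βL s₁ x1 x2 s₂ y1 y2 v)))
    ∧ (∀ (h g : H) (v : Ω) (ι κ : Type) (s : Finset ι) (t : Finset κ)
        (h1 h2 : ι → H) (g1 g2 : κ → H),
        twistedComul k H χ χ' h = ∑ i ∈ s, h1 i ⊗ₜ[k] h2 i →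
        twistedComul k H χ χ' g = ∑ j ∈ t, g1 j ⊗ₜ[k] g2 j →
        twistedβL k H Ω aL aR βL s₁ x1 x2 s₂ y1 y2 (aR g (aL h v))
          = ∑ i ∈ s, ∑ j ∈ t,
              (TensorProduct.map
                ((LinearMap.mulLeft k (h1 i)) ∘ₗ (LinearMap.mulRight k (g1 j)))
                ((aR (g2 j)) ∘ₗ (aL (h2 i))))
                (twistedβL k H Ω aL aR βL s₁ x1 x2 s₂ y1 y2 v))
    ∧ (∀ v : Ω,
        (LinearMap.lTensor H (twistedβR k H Ω aL aR βR s₁ x1 x2 s₂ y1 y2))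
            (twistedβL k H Ω aL aR βL s₁ x1 x2 s₂ y1 y2 v)
          = (TensorProduct.assoc k H Ω H)
              ((LinearMap.rTensor H (twistedβL k H Ω aL aR βL s₁ x1 x2 s₂ y1 y2))
                (twistedβR k H Ω aL aR βR s₁ x1 x2 s₂ y1 y2 v))) :=
  statement_6_general aL aR βL βR hB χ χ' hχ s₁ x1 x2 s₂ y1 y2 hx hy
end
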